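/- arXiv:2303.12172 — 10 statements merged into one kernel-verified Lean document; each statement's English description precedes it below -/
import Mathlib

section
/- Let M be a symmetric r×r real matrix with nonnegative diagonal entries and strictly negative off-diagonal entries. Then the quantity Λ(M) = sup over strictly positive vectors v of min over coordinates s of (Mv)_s / v_s equals the smallest eigenvalue of M. -/
/-!
Let `c` be the least eigenvalue of `M` and `u` an eigenvector for it, so that `M - c • 1` is
positive semidefinite. As the off-diagonal entries are negative, passing from `u` to `|u|` does
not increase the quadratic form of `M - c • 1`, so `|u|` is also in its kernel; an eigenvector
that is nonnegative and nonzero must then be strictly positive. For positive `v` with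
`m • v ≤ M v` entrywise, pairing with the positive (left) eigenvector `|u|` gives `m ≤ c`,
and `v = |u|` attains `c`.
-/

namespace Matrix

variable {n 𝕜 : Type*} [Fintype n]

open scoped MatrixOrder ComplexOrder in
theorem IsHermitian.posSemidef_sub_smul_one [RCLike 𝕜] [DecidableEq n] {A : Matrix n n 𝕜}
    (hA : A.IsHermitian) {c : ℝ} (hc : ∀ i, c ≤ hA.eigenvalues i) :
    (A - c • (1 : Matrix n n 𝕜)).PosSemidef := by
  have hle := (algebraMap_le_iff_le_spectrum (R := ℝ) (a := A) (r := c) hA).mpr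
  rw [hA.spectrum_real_eq_range_eigenvalues, Algebra.algebraMap_eq_smul_one] at hle
  exact hle (Set.forall_mem_range.mpr hc)

theorem abs_dotProduct_mulVec_abs_le {A : Matrix n n ℝ} (hA : ∀ i j, i ≠ j → A i j ≤ 0)
    (x : n → ℝ) : |x| ⬝ᵥ (A *ᵥ |x|) ≤ x ⬝ᵥ (A *ᵥ x) := by
  simp only [dotProduct, mulVec, Finset.mul_sum, Pi.abs_apply]
  refine Finset.sum_le_sum fun i _ => Finset.sum_le_sum fun j _ => ?_
  rcases eq_or_ne i j with rfl | hij
  · exact le_of_eq (by linear_combination A i i * abs_mul_abs_self (x i))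
  · have hx : x i * x j ≤ |x i| * |x j| := (le_abs_self _).trans (abs_mul _ _).le
    nlinarith [hA i j hij]

theorem mulVec_abs_eq_smul_abs [DecidableEq n] {A : Matrix n n ℝ} {c : ℝ}
    (hpsd : (A - c • (1 : Matrix n n ℝ)).PosSemidef) (hA : ∀ i j, i ≠ j → A i j ≤ 0)
    {u : n → ℝ} (hu : A *ᵥ u = c • u) : A *ᵥ |u| = c • |u| := by
  set B := A - c • (1 : Matrix n n ℝ)
  have hB : ∀ i j, i ≠ j → B i j ≤ 0 := fun i j hij => by
    simpa [B, one_apply_ne hij] using hA i j hij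
  have hBu : B *ᵥ u = 0 := by simp [B, sub_mulVec, smul_mulVec, hu]
  have hquad : star |u| ⬝ᵥ (B *ᵥ |u|) = 0 :=
    le_antisymm (by simpa [hBu] using abs_dotProduct_mulVec_abs_le hB u)
      (hpsd.dotProduct_mulVec_nonneg |u|)
  have hBabs : B *ᵥ |u| = 0 := (hpsd.dotProduct_mulVec_zero_iff |u|).mp hquad
  simpa [B, sub_mulVec, smul_mulVec, sub_eq_zero] using hBabs

theorem pos_of_mulVec_eq_smul {A : Matrix n n ℝ} (hA : ∀ i j, i ≠ j → A i j < 0) {c : ℝ}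
    {w : n → ℝ} (hw₀ : 0 ≤ w) (hw : w ≠ 0) (hAw : A *ᵥ w = c • w) (i : n) : 0 < w i := by
  refine (hw₀ i).lt_of_ne' fun hwi => hw (funext fun j => ?_)
  have hterm : ∀ k ∈ Finset.univ, A i k * w k ≤ 0 := fun k _ => by
    rcases eq_or_ne i k with rfl | hik
    · simp [hwi]
    · exact mul_nonpos_of_nonpos_of_nonneg (hA i k hik).le (hw₀ k)
  have hsum : ∑ k, A i k * w k = 0 := by
    simpa [mulVec, dotProduct, hwi] using congrFun hAw i
  have hj := (Finset.sum_eq_zero_iff_of_nonpos hterm).mp hsum j (Finset.mem_univ j)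
  rcases eq_or_ne i j with rfl | hij
  · exact hwi
  · exact (mul_eq_zero.mp hj).resolve_left (hA i j hij).ne

theorem iInf_mulVec_div_le_of_vecMul_eq_smul {A : Matrix n n ℝ} {c : ℝ} {v w : n → ℝ}
    (hv : ∀ i, 0 < v i) (hw₀ : 0 ≤ w) (hw : w ≠ 0) (hwA : w ᵥ* A = c • w) :
    ⨅ s, (A *ᵥ v) s / v s ≤ c := by
  set m := ⨅ s, (A *ᵥ v) s / v s
  have hm : ∀ s, m * v s ≤ (A *ᵥ v) s := fun s =>
    (le_div_iff₀ (hv s)).mp (ciInf_le (Finite.bddBelow_range _) s)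
  have hwv : 0 < w ⬝ᵥ v := by
    obtain ⟨s, hs⟩ := Function.ne_iff.mp hw
    exact Finset.sum_pos' (fun i _ => mul_nonneg (hw₀ i) (hv i).le)
      ⟨s, Finset.mem_univ s, mul_pos ((hw₀ s).lt_of_ne' hs) (hv s)⟩
  refine le_of_mul_le_mul_right ?_ hwv
  calc m * (w ⬝ᵥ v) = w ⬝ᵥ (m • v) := by rw [dotProduct_smul, smul_eq_mul]
    _ ≤ w ⬝ᵥ (A *ᵥ v) := dotProduct_le_dotProduct_of_nonneg_left hm hw₀
    _ = c * (w ⬝ᵥ v) := by rw [dotProduct_mulVec, hwA, smul_dotProduct, smul_eq_mul]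

theorem iInf_mulVec_div_eq_of_mulVec_eq_smul [Nonempty n] {A : Matrix n n ℝ} {c : ℝ}
    {w : n → ℝ} (hw : ∀ i, w i ≠ 0) (hAw : A *ᵥ w = c • w) :
    ⨅ s, (A *ᵥ w) s / w s = c := by
  simp [hAw, mul_div_cancel_right₀ _ (hw _)]

theorem IsHermitian.isGreatest_iInf_mulVec_div [DecidableEq n] [Nonempty n] {A : Matrix n n ℝ}
    (hA : A.IsHermitian) (hoff : ∀ i j, i ≠ j → A i j < 0) :
    IsGreatest (Set.range fun v : {v : n → ℝ // ∀ i, 0 < v i} => ⨅ s, (A *ᵥ v.1) s / v.1 s)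
      (⨅ i, hA.eigenvalues i) := by
  obtain ⟨i₀, hi₀⟩ := exists_eq_ciInf_of_finite (f := hA.eigenvalues)
  set c := ⨅ i, hA.eigenvalues i
  have hc : ∀ i, c ≤ hA.eigenvalues i := ciInf_le (Finite.bddBelow_range _)
  set u : n → ℝ := ⇑(hA.eigenvectorBasis i₀)
  have hu : A *ᵥ u = c • u := hi₀ ▸ hA.mulVec_eigenvectorBasis i₀
  have hu₀ : |u| ≠ 0 := (Pi.abs_eq_zero u).ne.mpr <|
    (WithLp.ofLp_eq_zero 2).ne.mpr (hA.eigenvectorBasis.orthonormal.ne_zero i₀)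
  have hAw : A *ᵥ |u| = c • |u| :=
    mulVec_abs_eq_smul_abs (hA.posSemidef_sub_smul_one hc) (fun i j h => (hoff i j h).le) hu
  have hwA : |u| ᵥ* A = c • |u| := by
    rw [← mulVec_transpose, (isHermitian_iff_isSymm.mp hA).eq, hAw]
  have hpos := pos_of_mulVec_eq_smul hoff (abs_nonneg u) hu₀ hAw
  refine ⟨⟨⟨|u|, hpos⟩, iInf_mulVec_div_eq_of_mulVec_eq_smul (fun i => (hpos i).ne') hAw⟩, ?_⟩
  rintro _ ⟨⟨v, hv⟩, rfl⟩
  exact iInf_mulVec_div_le_of_vecMul_eq_smul hv (abs_nonneg u) hu₀ hwA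

end Matrix

theorem stmt_0_general (r : ℕ) (hr : 0 < r) (M : Matrix (Fin r) (Fin r) ℝ)
    (hM : M.IsHermitian)
    (hoff : ∀ i j, i ≠ j → M i j < 0) :
    (⨆ v : {v : Fin r → ℝ // ∀ i, 0 < v i}, ⨅ s, M.mulVec v.1 s / v.1 s)
      = ⨅ i, hM.eigenvalues i :=
  have : Nonempty (Fin r) := ⟨⟨0, hr⟩⟩
  (hM.isGreatest_iInf_mulVec_div hoff).csSup_eq

/-- Proposition: for a symmetric `r × r` real matrix `M` with nonnegative diagonal
entries and strictly negative off-diagonal entries, the quantity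
`Λ(M) = sup_{v > 0} min_s (Mv)_s / v_s` equals the smallest eigenvalue of `M`. -/
theorem stmt_0 (r : ℕ) (hr : 0 < r) (M : Matrix (Fin r) (Fin r) ℝ)
    (hM : M.IsHermitian)
    (hdiag : ∀ i, 0 ≤ M i i)
    (hoff : ∀ i j, i ≠ j → M i j < 0) :
    (⨆ v : {v : Fin r → ℝ // ∀ i, 0 < v i}, ⨅ s, M.mulVec v.1 s / v.1 s)
      = ⨅ i, hM.eigenvalues i :=
  stmt_0_general r hr M hM hoff
end

section
/- Let A be an r×r real matrix with positive diagonal entries, negative off-diagonal entries, and all row sums equal to zero. If a vector v satisfies (Av)_i ≤ ε for all i, then |v_i − v_j| ≤ ε / a_min for all i, j, where a_min is the minimum of |a_{i,j}| over i ≠ j. -/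
open scoped BigOperators

/-- Lemma: if `A` has positive diagonal entries, negative off-diagonal entries and all
row sums equal to zero, and `amin` is a positive lower bound on `|A i j|` for `i ≠ j`
(in particular the minimum of these values), then any `v` with `(Av)_i ≤ ε` for all `i`
satisfies `|v i - v j| ≤ ε / amin` for all `i, j`. -/
theorem stmt_1 (r : ℕ) (A : Matrix (Fin r) (Fin r) ℝ)
    (hdiag : ∀ i, 0 < A i i)
    (hoff : ∀ i j, i ≠ j → A i j < 0)
    (hrow : ∀ i, ∑ j, A i j = 0)
    (ε : ℝ) (hε : 0 ≤ ε)
    (amin : ℝ) (hamin : 0 < amin)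
    (haminle : ∀ i j, i ≠ j → amin ≤ |A i j|)
    (v : Fin r → ℝ) (hv : ∀ i, A.mulVec v i ≤ ε) :
    ∀ i j, |v i - v j| ≤ ε / amin := by
  intro i j
  obtain ⟨m, -, hm⟩ := Finset.exists_max_image Finset.univ v ⟨i, Finset.mem_univ i⟩
  have hm' : ∀ k, v k ≤ v m := fun k => hm k (Finset.mem_univ k)
  have key : ∀ k, v m - v k ≤ ε / amin := by
    intro k
    by_cases hk : k = m
    · subst hk; simpa using div_nonneg hε hamin.le
    · have hnn : ∀ l ∈ Finset.univ, 0 ≤ A m l * (v l - v m) := by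
        intro l _
        by_cases hl : l = m
        · subst hl; simp
        · have h1 : A m l < 0 := hoff m l (fun h => hl h.symm)
          have h2 : v l - v m ≤ 0 := by linarith [hm' l]
          nlinarith
      have hsingle : A m k * (v k - v m) ≤ ∑ l, A m l * (v l - v m) :=
        Finset.single_le_sum hnn (Finset.mem_univ k)
      have hsum : ∑ l, A m l * (v l - v m) = A.mulVec v m := by
        simp [Matrix.mulVec, dotProduct, mul_sub, Finset.sum_sub_distrib,
          ← Finset.sum_mul, hrow m]
      have hmk : A m k < 0 := hoff m k (fun h => hk h.symm)
      have habs : amin ≤ -(A m k) := by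
        have := haminle m k (fun h => hk h.symm)
        rwa [abs_of_neg hmk] at this
      have hle : amin * (v m - v k) ≤ A m k * (v k - v m) := by
        nlinarith [hm' k]
      have : amin * (v m - v k) ≤ ε := by
        calc amin * (v m - v k) ≤ A m k * (v k - v m) := hle
          _ ≤ ∑ l, A m l * (v l - v m) := hsingle
          _ = A.mulVec v m := hsum
          _ ≤ ε := hv m
      rw [le_div_iff₀ hamin]
      linarith
  rw [abs_sub_le_iff]
  constructor
  · linarith [key j, hm' i]
  · linarith [key i, hm' j]
end

section
/- Let A ∈ ℝ_{>0}^{r×r}, vectors a, b, c ∈ ℝ_{>0}^r and scalar c > 0. Suppose the system A x + a y = c ⊙ x, ⟨b, x⟩ = c has the solution (y, x) = (y₀, 1) (the all-ones vector). If c' ∈ ℝ_{>0}^r satisfies ‖c − c'‖_∞ ≤ ε, then any nonnegative solution (y, x) of A x + a y = c' ⊙ x with ⟨b, x⟩ = c satisfies |y − y₀| ≤ ε c / (a_min b_min) and ‖x − 1‖_∞ ≤ (2 a_max / a_min) · ε c / (A_min b_min). -/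
open scoped BigOperators

set_option maxHeartbeats 1000000

/-- Lemma: stability of the solution of the system `A x + a y = c ⊙ x`, `⟨b, x⟩ = c`
under perturbation of `c`.  Here `Amin, amin, bmin` are (positive) lower bounds on the
entries of `A, a, b` and `amax` is an upper bound on the entries of `a` (in particular
one may take the exact minima/maximum).  If `(y₀, 𝟙)` solves the system with right-hand
side `cvec`, and `c'` satisfies `‖cvec − c'‖_∞ ≤ ε`, then any nonnegative solution
`(y, x)` of the system with right-hand side `c'` satisfies
`|y − y₀| ≤ ε c / (amin bmin)` and `‖x − 𝟙‖_∞ ≤ (2 amax / amin) · ε c / (Amin bmin)`. -/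
theorem stmt_3 (r : ℕ) (A : Matrix (Fin r) (Fin r) ℝ)
    (a b cvec c' : Fin r → ℝ) (c ε y₀ : ℝ)
    (hA : ∀ i j, 0 < A i j) (ha : ∀ i, 0 < a i) (hb : ∀ i, 0 < b i)
    (hcvec : ∀ i, 0 < cvec i) (hc' : ∀ i, 0 < c' i)
    (hc : 0 < c) (hε : 0 ≤ ε) (hy₀ : 0 ≤ y₀)
    (Amin amin amax bmin : ℝ)
    (hAmin : 0 < Amin) (hamin : 0 < amin) (hbmin : 0 < bmin)
    (hAminle : ∀ i j, Amin ≤ A i j)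
    (haminle : ∀ i, amin ≤ a i) (hamaxle : ∀ i, a i ≤ amax)
    (hbminle : ∀ i, bmin ≤ b i)
    (hsol : ∀ i, (∑ j, A i j) + a i * y₀ = cvec i)
    (hsol2 : ∑ i, b i = c)
    (hclose : ∀ i, |cvec i - c' i| ≤ ε)
    (y : ℝ) (x : Fin r → ℝ) (hy : 0 ≤ y) (hx : ∀ i, 0 ≤ x i)
    (heq : ∀ i, A.mulVec x i + a i * y = c' i * x i)
    (heq2 : ∑ i, b i * x i = c) :
    |y - y₀| ≤ ε * c / (amin * bmin)
      ∧ ∀ i, |x i - 1| ≤ (2 * amax / amin) * (ε * c / (Amin * bmin)) := by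

  -- r is positive
  have hr : 0 < r := by
    rcases Nat.eq_zero_or_pos r with h | h
    · subst h
      simp at hsol2
      linarith
    · exact h
  have hne : Nonempty (Fin r) := ⟨⟨0, hr⟩⟩
  obtain ⟨iM, hiM⟩ := Finite.exists_max x
  obtain ⟨im, him⟩ := Finite.exists_min x
  set M := x iM with hM
  set m := x im with hm
  have hcl : ∀ i, -ε ≤ cvec i - c' i ∧ cvec i - c' i ≤ ε := fun i => abs_le.mp (hclose i)
  have hamam : amin ≤ amax := le_trans (haminle ⟨0, hr⟩) (hamaxle ⟨0, hr⟩)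
  -- sum of b i * (x i - 1) is zero
  have hsum0 : ∑ i, b i * (x i - 1) = 0 := by
    simp only [mul_sub, mul_one, Finset.sum_sub_distrib, heq2, hsol2, sub_self]
  have hM1 : 1 ≤ M := by
    by_contra h
    push_neg at h
    have : ∑ i, b i * (x i - 1) < ∑ _i : Fin r, (0:ℝ) := by
      apply Finset.sum_lt_sum_of_nonempty Finset.univ_nonempty
      intro i _
      have h1 := hiM i
      have h2 := hb i
      nlinarith
    simp at this
    linarith [hsum0]
  have hm1 : m ≤ 1 := by
    by_contra h
    push_neg at h
    have : ∑ _i : Fin r, (0:ℝ) < ∑ i, b i * (x i - 1) := by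
      apply Finset.sum_lt_sum_of_nonempty Finset.univ_nonempty
      intro i _
      have h1 := him i
      have h2 := hb i
      nlinarith
    simp at this
    linarith [hsum0]
  -- each b i * x i ≤ c
  have hbx : ∀ i, b i * x i ≤ c := by
    intro i
    have := Finset.single_le_sum (f := fun i => b i * x i)
      (fun j _ => mul_nonneg (hb j).le (hx j)) (Finset.mem_univ i)
    rw [heq2] at this
    exact this
  have hMc : bmin * M ≤ c := by
    have h1 := hbx iM
    have h2 := hbminle iM
    have h3 := hx iM
    nlinarith
  have hmc : bmin * m ≤ c := by
    have := him iM
    nlinarith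
  have hm0 : 0 ≤ m := hx im
  -- unfold the equations
  have heq' : ∀ i, (∑ j, A i j * x j) + a i * y = c' i * x i := by
    intro i
    have := heq i
    simpa [Matrix.mulVec, dotProduct] using this
  -- lower bound on sum at im
  have hlo : m * (∑ j, A im j) ≤ ∑ j, A im j * x j := by
    rw [Finset.mul_sum]
    apply Finset.sum_le_sum
    intro j _
    have h1 := him j
    have h2 := hA im j
    nlinarith
  -- upper bound on sum at iM
  have hhi : ∑ j, A iM j * x j ≤ M * (∑ j, A iM j) := by
    rw [Finset.mul_sum]
    apply Finset.sum_le_sum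
    intro j _
    have h1 := hiM j
    have h2 := hA iM j
    nlinarith
  set t := y - y₀ with ht
  -- key inequality from row im
  have h_im : a im * t ≤ ε * m := by
    have h1 := heq' im
    have h2 := hsol im
    have h3 := (hcl im).1
    have h4 := ha im
    have h5 : m * (c' im - cvec im) ≤ m * ε := by
      have : c' im - cvec im ≤ ε := by linarith
      exact mul_le_mul_of_nonneg_left this hm0
    have h6 : m * ((∑ j, A im j) + a im * y₀) = m * cvec im := by rw [h2]
    nlinarith [mul_nonneg (sub_nonneg.mpr hm1) (mul_nonneg h4.le hy₀)]
  -- key inequality from row iM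
  have h_iM : -(ε * M) ≤ a iM * t := by
    have h1 := heq' iM
    have h2 := hsol iM
    have h3 := (hcl iM).2
    have h4 := ha iM
    have hM0 : (0:ℝ) ≤ M := le_trans zero_le_one hM1
    have h5 : -(M * ε) ≤ M * (c' iM - cvec iM) := by
      have : -ε ≤ c' iM - cvec iM := by linarith
      nlinarith
    have h6 : M * ((∑ j, A iM j) + a iM * y₀) = M * cvec iM := by rw [h2]
    nlinarith [mul_nonneg (sub_nonneg.mpr hM1) (mul_nonneg h4.le hy₀)]
  -- bounds on amin * bmin * t
  have hub : amin * bmin * t ≤ ε * c := by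
    rcases le_or_gt 0 t with h | h
    · have h1 : amin * t ≤ a im * t := mul_le_mul_of_nonneg_right (haminle im) h
      have h2 : bmin * (amin * t) ≤ bmin * (ε * m) :=
        mul_le_mul_of_nonneg_left (le_trans h1 h_im) hbmin.le
      have h3 : ε * (bmin * m) ≤ ε * c := mul_le_mul_of_nonneg_left hmc hε
      nlinarith
    · nlinarith [mul_nonneg hε hc.le, mul_pos hamin hbmin]
  have hlb : -(ε * c) ≤ amin * bmin * t := by
    rcases le_or_gt 0 t with h | h
    · nlinarith [mul_nonneg hε hc.le, mul_pos hamin hbmin]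
    · have h1 : a iM * t ≤ amin * t := by nlinarith [haminle iM]
      have h2 : bmin * (-(ε * M)) ≤ bmin * (amin * t) :=
        mul_le_mul_of_nonneg_left (le_trans h_iM h1) hbmin.le
      have h3 : ε * (bmin * M) ≤ ε * c := mul_le_mul_of_nonneg_left hMc hε
      nlinarith
  constructor
  · rw [abs_le]
    constructor
    · have hpos : 0 < amin * bmin := mul_pos hamin hbmin
      rw [neg_le, le_div_iff₀ hpos]
      nlinarith
    · have hpos : 0 < amin * bmin := mul_pos hamin hbmin
      rw [le_div_iff₀ hpos]
      nlinarith
  · -- bound on M - m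
    have hsle : A iM im * (M - m) ≤ ∑ j, A iM j * (M - x j) :=
      Finset.single_le_sum (f := fun j => A iM j * (M - x j))
        (fun j _ => mul_nonneg (hA iM j).le (sub_nonneg.mpr (hiM j))) (Finset.mem_univ im)
    have hsum_eq : ∑ j, A iM j * (M - x j) = M * (∑ j, A iM j) - ∑ j, A iM j * x j := by
      rw [Finset.mul_sum, ← Finset.sum_sub_distrib]
      apply Finset.sum_congr rfl
      intro j _
      ring
    have hM0 : (0:ℝ) ≤ M := le_trans zero_le_one hM1
    have hkey : Amin * (M - m) ≤ ε * M + a iM * t := by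
      have h1 := heq' iM
      have h2 := hsol iM
      have h3 := (hcl iM).2
      have h4 := ha iM
      have h5 : M * (cvec iM - c' iM) ≤ M * ε := mul_le_mul_of_nonneg_left h3 hM0
      have h6 : Amin * (M - m) ≤ A iM im * (M - m) := by
        have := him iM
        nlinarith [hAminle iM im]
      have h7 : M * ((∑ j, A iM j) + a iM * y₀) = M * cvec iM := by rw [h2]
      rw [hsum_eq] at hsle
      nlinarith [mul_nonneg (sub_nonneg.mpr hM1) (mul_nonneg h4.le hy₀)]
    have hεc : 0 ≤ ε * c := mul_nonneg hε hc.le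
    have hfin : Amin * (M - m) * (amin * bmin) ≤ 2 * amax * (ε * c) := by
      have hk2 : Amin * (M - m) * (amin * bmin) ≤ (ε * M + a iM * t) * (amin * bmin) :=
        mul_le_mul_of_nonneg_right hkey (mul_pos hamin hbmin).le
      have hA1 : ε * M * (amin * bmin) ≤ amax * (ε * c) := by
        have : amin * (ε * (bmin * M)) ≤ amin * (ε * c) :=
          mul_le_mul_of_nonneg_left (mul_le_mul_of_nonneg_left hMc hε) hamin.le
        nlinarith
      have hA2 : a iM * t * (amin * bmin) ≤ amax * (ε * c) := by
        rcases le_or_gt 0 t with h | h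
        · have h1 : a iM * (amin * bmin * t) ≤ a iM * (ε * c) :=
            mul_le_mul_of_nonneg_left hub (ha iM).le
          have h2 : a iM * (ε * c) ≤ amax * (ε * c) :=
            mul_le_mul_of_nonneg_right (hamaxle iM) hεc
          nlinarith
        · nlinarith [mul_pos (ha iM) (mul_pos hamin hbmin),
              mul_nonneg (by linarith : (0:ℝ) ≤ amax) hεc]
      nlinarith
    intro i
    have hxi1 : |x i - 1| ≤ M - m := by
      rw [abs_le]
      constructor
      · have := him i; linarith
      · have := hiM i; linarith
    refine le_trans hxi1 ?_
    rw [div_mul_div_comm, le_div_iff₀ (by positivity)]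
    nlinarith [hfin, mul_nonneg (mul_nonneg hε hc.le) (sub_nonneg.mpr hamam)]
end

section
/- Let A ∈ ℝ_{>0}^{r×r} and b ∈ ℝ_{>0}^r be such that the system A x = b ⊙ x admits the all-ones solution x = 1. Suppose b' ≤ b + ε·1 coordinatewise, A' ≥ A entrywise, and the system A' x = b' ⊙ x admits a nontrivial nonnegative solution x. Then every entry of A' − A is at most ε · (r A_max + A_min + ε) / A_min, where A_max and A_min are the largest and smallest entries of A. -/
open scoped BigOperators

/-- Lemma: let `A ∈ ℝ_{>0}^{r×r}` and `b ∈ ℝ_{>0}^r` be such that `A x = b ⊙ x` admits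
the all-ones solution (i.e. the row sums of `A` equal `b`).  If `b' ≤ b + ε·𝟙`
coordinatewise, `A' ≥ A` entrywise, and `A' x = b' ⊙ x` admits a nontrivial nonnegative
solution `x`, then every entry of `A' − A` is at most `ε (r Amax + Amin + ε) / Amin`,
where `Amax, Amin` are upper/lower bounds on the entries of `A` (in particular the
largest and smallest entries). -/
theorem stmt_4 (r : ℕ) (A A' : Matrix (Fin r) (Fin r) ℝ)
    (b b' : Fin r → ℝ) (ε Amin Amax : ℝ)
    (hA : ∀ i j, 0 < A i j) (hA' : ∀ i j, 0 < A' i j)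
    (hb : ∀ i, 0 < b i) (hb' : ∀ i, 0 < b' i) (hε : 0 ≤ ε)
    (hAmin : 0 < Amin)
    (hAminle : ∀ i j, Amin ≤ A i j) (hAmaxle : ∀ i j, A i j ≤ Amax)
    (hones : ∀ i, ∑ j, A i j = b i)
    (hb'le : ∀ i, b' i ≤ b i + ε)
    (hAle : ∀ i j, A i j ≤ A' i j)
    (x : Fin r → ℝ) (hx : ∀ i, 0 ≤ x i) (hxne : x ≠ 0)
    (hsol : ∀ i, A'.mulVec x i = b' i * x i) :
    ∀ i j, A' i j - A i j ≤ ε * (r * Amax + Amin + ε) / Amin := by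
  intro i j
  obtain ⟨k0, hk0⟩ : ∃ k, x k ≠ 0 := Function.ne_iff.mp hxne
  have hk0pos : 0 < x k0 := (hx k0).lt_of_ne (Ne.symm hk0)
  have hsol' : ∀ m, ∑ l, A' m l * x l = b' m * x m := by
    intro m
    simpa [Matrix.mulVec, dotProduct] using hsol m
  -- all entries of x are positive
  have hxpos : ∀ m, 0 < x m := by
    intro m
    rcases (hx m).lt_or_eq with h | h
    · exact h
    · exfalso
      have hs := hsol' m
      have hpos : 0 < ∑ l, A' m l * x l :=
        Finset.sum_pos' (fun l _ => mul_nonneg (hA' m l).le (hx l))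
          ⟨k0, Finset.mem_univ _, mul_pos (hA' m k0) hk0pos⟩
      rw [hs, ← h] at hpos
      simp at hpos
  -- choose k minimizing x
  have : Nonempty (Fin r) := ⟨k0⟩
  obtain ⟨k, -, hkmin⟩ := Finset.exists_min_image Finset.univ x Finset.univ_nonempty
  have hkmin' : ∀ l, x k ≤ x l := fun l => hkmin l (Finset.mem_univ l)
  -- row k: x is nearly constant
  have hsumk : ∑ l, A k l * (x l - x k) ≤ ε * x k := by
    have h1 : ∑ l, A k l * x l ≤ b' k * x k := by
      rw [← hsol' k]
      exact Finset.sum_le_sum fun l _ => mul_le_mul_of_nonneg_right (hAle k l) (hx l)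
    have h2 : ∑ l, A k l * (x l - x k) = (∑ l, A k l * x l) - b k * x k := by
      rw [← hones k, Finset.sum_mul, ← Finset.sum_sub_distrib]
      congr 1; ext l; ring
    have h3 : b' k * x k ≤ (b k + ε) * x k :=
      mul_le_mul_of_nonneg_right (hb'le k) (hx k)
    rw [h2]; nlinarith
  have hxub : ∀ m, x m * Amin ≤ x k * Amin + ε * x k := by
    intro m
    have h3 : A k m * (x m - x k) ≤ ε * x k :=
      le_trans
        (Finset.single_le_sum
          (fun l _ => mul_nonneg (hA k l).le (sub_nonneg.2 (hkmin' l)))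
          (Finset.mem_univ m)) hsumk
    have h4 : Amin * (x m - x k) ≤ A k m * (x m - x k) :=
      mul_le_mul_of_nonneg_right (hAminle k m) (sub_nonneg.2 (hkmin' m))
    nlinarith
  -- row i
  have hd : (A' i j - A i j) * x j ≤ ∑ l, (A' i l - A i l) * x l :=
    Finset.single_le_sum
      (fun l _ => mul_nonneg (sub_nonneg.2 (hAle i l)) (hx l)) (Finset.mem_univ j)
  have hsplit : ∑ l, (A' i l - A i l) * x l = b' i * x i - ∑ l, A i l * x l := by
    rw [← hsol' i, ← Finset.sum_sub_distrib]
    congr 1; ext l; ring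
  have hS : b i * x k ≤ ∑ l, A i l * x l := by
    rw [← hones i, Finset.sum_mul]
    exact Finset.sum_le_sum fun l _ => mul_le_mul_of_nonneg_left (hkmin' l) (hA i l).le
  have hbi : b i ≤ r * Amax := by
    rw [← hones i]
    calc ∑ l, A i l ≤ ∑ _l : Fin r, Amax :=
          Finset.sum_le_sum fun l _ => hAmaxle i l
      _ = r * Amax := by
          simp [Finset.sum_const, Finset.card_univ, nsmul_eq_mul]
  have hbpos := hb i
  have hxk := hxpos k
  have hxj := hxpos j
  have hkj := hkmin' j
  -- combine
  have key : (A' i j - A i j) * x j ≤ (b i + ε) * x i - b i * x k := by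
    have h3 : b' i * x i ≤ (b i + ε) * x i :=
      mul_le_mul_of_nonneg_right (hb'le i) (hx i)
    nlinarith [hd, hsplit, hS]
  have hxi := hxub i
  have hD : 0 ≤ A' i j - A i j := sub_nonneg.2 (hAle i j)
  rw [le_div_iff₀ hAmin]
  have hmain : (A' i j - A i j) * Amin * x j ≤ ε * (↑r * Amax + Amin + ε) * x j := by
    nlinarith [mul_le_mul_of_nonneg_right key hAmin.le,
      mul_le_mul_of_nonneg_left hxi (add_nonneg hbpos.le hε),
      mul_le_mul_of_nonneg_right (hxub i) hε,
      mul_nonneg hε hxk.le, mul_nonneg (mul_nonneg hε hε) hxk.le,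
      mul_le_mul_of_nonneg_right hbi (mul_nonneg hε hxk.le),
      mul_le_mul_of_nonneg_left hkj hε]
  exact le_of_mul_le_mul_right hmain hxj
end

section
/- Let ξ : [0,1] → ℝ be given by a power series ξ(q) = Σ_{k≥2} c_k q^k with nonnegative coefficients (convergent at 1, not identically zero). Then sup over nondecreasing absolutely continuous p : [0,1] → [0,1] with p(1) = 1 of ∫₀¹ ((p ξ')'(q))^{1/2} dq equals ∫₀¹ ξ''(q)^{1/2} dq, attained at p ≡ 1. In particular, for every such p and every t ∈ [0,1], ∫_t¹ (p ξ')'(q) dq ≥ ∫_t¹ ξ''(q) dq (so (p ξ')' majorizes ξ''), and by concavity of the square root this forces ∫₀¹ ((p ξ')'(q))^{1/2} dq ≤ ∫₀¹ ξ''(q)^{1/2} dq. -/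
open MeasureTheory
open scoped BigOperators

/-- The single-species mixture function `ξ(q) = Σ_{k≥2} c_k q^k`, here written with
coefficients `c : ℕ → ℝ` via `ξ(q) = Σ_{k≥0} c k · q^(k+2)`. -/
noncomputable def xiOne (c : ℕ → ℝ) (q : ℝ) : ℝ := ∑' k : ℕ, c k * q ^ (k + 2)

/-- Its first derivative `ξ'(q) = Σ_k (k+2) c_k q^(k+1)`. -/
noncomputable def xiOne' (c : ℕ → ℝ) (q : ℝ) : ℝ := ∑' k : ℕ, ((k : ℝ) + 2) * c k * q ^ (k + 1)

/-- Its second derivative `ξ''(q) = Σ_k (k+2)(k+1) c_k q^k`. -/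
noncomputable def xiOne'' (c : ℕ → ℝ) (q : ℝ) : ℝ :=
  ∑' k : ℕ, ((k : ℝ) + 2) * ((k : ℝ) + 1) * c k * q ^ k

/-! With `s = √ξ''` and `Φ q = ∫₀^q s`, monotonicity of `ξ''` gives
`ξ' q = ∫₀^q ξ'' ≤ Φ q · s q`, so by AM–GM
`√(p' ξ' + p ξ'') ≤ √(s (p' Φ + p s)) ≤ (1 + p) s / 2 + p' Φ / 2`.
Integrating `p' Φ` by parts (using `p 1 = 1`) turns it into `∫ s (1 - p)`, so the right-hand
side integrates to exactly `∫ s`; equality holds at `p ≡ 1`. -/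

open Set intervalIntegral

section PowerSeries

variable {a : ℕ → ℝ}

lemma summable_mul_pow_of_nonneg (ha : ∀ k, 0 ≤ a k) (hs : Summable a) {q : ℝ}
    (hq : q ∈ Icc 0 1) : Summable fun k => a k * q ^ k :=
  hs.of_nonneg_of_le (fun k => mul_nonneg (ha k) (pow_nonneg hq.1 k))
    fun k => mul_le_of_le_one_right (ha k) (pow_le_one₀ hq.1 hq.2)

lemma monotoneOn_tsum_mul_pow (ha : ∀ k, 0 ≤ a k) (hs : Summable a) :
    MonotoneOn (fun q => ∑' k, a k * q ^ k) (Icc 0 1) := fun _ hx _ hy hxy =>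
  Summable.tsum_le_tsum (fun k => mul_le_mul_of_nonneg_left (pow_le_pow_left₀ hx.1 hxy k) (ha k))
    (summable_mul_pow_of_nonneg ha hs hx) (summable_mul_pow_of_nonneg ha hs hy)

lemma hasSum_integral_tsum_mul_pow (ha : ∀ k, 0 ≤ a k) (hs : Summable a) {q : ℝ}
    (hq : q ∈ Icc 0 1) :
    HasSum (fun k => a k * q ^ (k + 1) / ((k : ℝ) + 1)) (∫ s in 0..q, ∑' k, a k * s ^ k) := by
  have hIoc : ∀ t ∈ uIoc 0 q, t ∈ Icc (0 : ℝ) 1 := fun t ht => by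
    rw [uIoc_of_le hq.1] at ht
    exact ⟨ht.1.le, ht.2.trans hq.2⟩
  have h := hasSum_integral_of_dominated_convergence (μ := volume) (F := fun k s => a k * s ^ k)
    (fun k _ => a k) (fun k => (by fun_prop : Continuous _).aestronglyMeasurable)
    (fun k => Filter.Eventually.of_forall fun t ht => by
      rw [Real.norm_eq_abs, abs_of_nonneg (mul_nonneg (ha k) (pow_nonneg (hIoc t ht).1 k))]
      exact mul_le_of_le_one_right (ha k) (pow_le_one₀ (hIoc t ht).1 (hIoc t ht).2))
    (Filter.Eventually.of_forall fun _ _ => hs) intervalIntegrable_const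
    (Filter.Eventually.of_forall fun t ht => (summable_mul_pow_of_nonneg ha hs (hIoc t ht)).hasSum)
  have hterm : ∀ k, ∫ t in 0..q, a k * t ^ k = a k * q ^ (k + 1) / ((k : ℝ) + 1) := fun k => by
    rw [intervalIntegral.integral_const_mul, integral_pow]
    simp [mul_div_assoc]
  simpa only [hterm] using h

end PowerSeries

lemma xiOne''_nonneg {c : ℕ → ℝ} (hc : ∀ k, 0 ≤ c k) {q : ℝ} (hq : 0 ≤ q) : 0 ≤ xiOne'' c q :=
  tsum_nonneg fun k => mul_nonneg (mul_nonneg (by positivity) (hc k)) (pow_nonneg hq k)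

section Xi

variable {c : ℕ → ℝ} (hc : ∀ k, 0 ≤ c k)
  (hsum : Summable (fun k : ℕ => ((k : ℝ) + 2) * ((k : ℝ) + 1) * c k))
include hc hsum

lemma monotoneOn_xiOne'' : MonotoneOn (xiOne'' c) (Icc 0 1) :=
  monotoneOn_tsum_mul_pow (fun k => mul_nonneg (by positivity) (hc k)) hsum

lemma xiOne'_eq_integral {q : ℝ} (hq : q ∈ Icc 0 1) :
    xiOne' c q = ∫ s in 0..q, xiOne'' c s := by
  refine (tsum_congr fun k => ?_).trans
    (hasSum_integral_tsum_mul_pow (fun k => mul_nonneg (by positivity) (hc k)) hsum hq).tsum_eq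
  field_simp

end Xi

lemma integral_le_integral_sqrt_mul_sqrt {f : ℝ → ℝ} {a b : ℝ} (hab : a ≤ b)
    (hf : MonotoneOn f (Icc a b)) (hfa : 0 ≤ f a) :
    ∫ x in a..b, f x ≤ (∫ x in a..b, √(f x)) * √(f b) := by
  have hsqrt : MonotoneOn (fun x => √(f x)) (Icc a b) := fun x hx y hy hxy =>
    Real.sqrt_le_sqrt (hf hx hy hxy)
  rw [← intervalIntegral.integral_mul_const]
  have hI : uIcc a b = Icc a b := uIcc_of_le hab
  refine integral_mono_on hab (hI ▸ hf).intervalIntegrable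
    ((hI ▸ hsqrt).intervalIntegrable.mul_const _) fun x hx => ?_
  calc f x = √(f x) * √(f x) := (Real.mul_self_sqrt (hfa.trans (hf ⟨le_rfl, hab⟩ hx hx.1))).symm
    _ ≤ √(f x) * √(f b) :=
      mul_le_mul_of_nonneg_left (Real.sqrt_le_sqrt (hf hx ⟨hab, le_rfl⟩ hx.2)) (Real.sqrt_nonneg _)

namespace intervalIntegral

theorem integral_mono_on_of_nonneg {f g : ℝ → ℝ} {a b : ℝ} (hab : a ≤ b)
    (hf : ∀ x ∈ Icc a b, 0 ≤ f x) (hg : IntervalIntegrable g volume a b)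
    (h : ∀ x ∈ Icc a b, f x ≤ g x) : ∫ x in a..b, f x ≤ ∫ x in a..b, g x := by
  -- `f` need not be integrable: if it is not, its integral is `0`.
  simp only [integral_of_le hab]
  exact integral_mono_of_nonneg
    ((ae_restrict_iff' measurableSet_Ioc).2 (.of_forall fun x hx => hf x (Ioc_subset_Icc_self hx)))
    ((intervalIntegrable_iff_integrableOn_Ioc_of_le hab).1 hg)
    ((ae_restrict_iff' measurableSet_Ioc).2 (.of_forall fun x hx => h x (Ioc_subset_Icc_self hx)))

theorem integral_mul_integral_swap {f g : ℝ → ℝ} {a b : ℝ}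
    (hf : IntervalIntegrable f volume a b) (hg : IntervalIntegrable g volume a b) :
    ∫ x in a..b, f x * ∫ t in a..x, g t = ∫ x in a..b, g x * ∫ t in x..b, f t := by
  have hF := hf.absolutelyContinuousOnInterval_intervalIntegral (c := a) left_mem_uIcc
  have hG := hg.absolutelyContinuousOnInterval_intervalIntegral (c := a) left_mem_uIcc
  have hderiv {h k : ℝ → ℝ} (hh : IntervalIntegrable h volume a b) :
      ∫ x in a..b, k x * deriv (fun x => ∫ t in a..x, h t) x = ∫ x in a..b, k x * h x := by
    refine integral_congr_ae ?_
    filter_upwards [hh.ae_hasDerivAt_integral] with x hx hxab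
    rw [(hx (uIoc_subset_uIcc hxab) a left_mem_uIcc).deriv]
  have parts := hF.integral_mul_deriv_eq_deriv_mul hG
  simp only [integral_same, zero_mul, sub_zero, hderiv hg] at parts
  simp only [mul_comm (deriv _ _), hderiv hf] at parts
  have hsub : ∀ x ∈ uIcc a b, ∫ t in x..b, f t = (∫ t in a..b, f t) - ∫ t in a..x, f t :=
    fun x hx => (integral_interval_sub_left hf (hf.mono_set (uIcc_subset_uIcc_left hx))).symm
  rw [integral_congr (fun x hx => congrArg (g x * ·) (hsub x hx))]
  simp only [mul_sub]
  rw [integral_sub (hg.mul_const _) (hg.mul_continuousOn hF.continuousOn),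
    intervalIntegral.integral_mul_const, integral_congr fun x _ => mul_comm (g x) _,
    integral_congr fun x _ => mul_comm (f x) _, parts]
  ring

end intervalIntegral

lemma sqrt_add_le_of_le_mul {F s Φ p p' : ℝ} (hs : 0 ≤ s) (hΦ : 0 ≤ Φ) (hp : 0 ≤ p)
    (hp' : 0 ≤ p') (hF : F ≤ Φ * s) :
    √(p' * F + p * s ^ 2) ≤ (1 + p) / 2 * s + p' * Φ / 2 := by
  rw [Real.sqrt_le_left (by positivity)]
  nlinarith [mul_le_mul_of_nonneg_left hF hp', sq_nonneg (s - p * s - p' * Φ)]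

theorem integral_sqrt_mul_add_mul_le_integral_sqrt {f F p p' : ℝ → ℝ} (hf0 : 0 ≤ f 0)
    (hf : MonotoneOn f (Icc 0 1)) (hF : ∀ q ∈ Icc (0 : ℝ) 1, F q ≤ ∫ s in 0..q, f s)
    (hp0 : ∀ q ∈ Icc (0 : ℝ) 1, 0 ≤ p q) (hp1 : p 1 = 1) (hp'0 : ∀ q, 0 ≤ p' q)
    (hp' : IntegrableOn p' (Icc 0 1))
    (hrep : ∀ q ∈ Icc (0 : ℝ) 1, p q = p 0 + ∫ t in 0..q, p' t) :
    ∫ q in 0..1, √(p' q * F q + p q * f q) ≤ ∫ q in 0..1, √(f q) := by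
  have hI : uIcc (0 : ℝ) 1 = Icc 0 1 := uIcc_of_le zero_le_one
  set s : ℝ → ℝ := fun q => √(f q)
  set Φ : ℝ → ℝ := fun q => ∫ t in 0..q, s t
  have hs : IntervalIntegrable s volume 0 1 :=
    MonotoneOn.intervalIntegrable (hI ▸ fun x hx y hy hxy => Real.sqrt_le_sqrt (hf hx hy hxy))
  have hp'I : IntervalIntegrable p' volume 0 1 := (hI ▸ hp').intervalIntegrable
  have hΦ : ContinuousOn Φ (uIcc 0 1) :=
    (hs.absolutelyContinuousOnInterval_intervalIntegral left_mem_uIcc).continuousOn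
  have hp : ContinuousOn p (uIcc 0 1) :=
    ((hp'I.absolutelyContinuousOnInterval_intervalIntegral left_mem_uIcc).continuousOn.const_add
      (p 0)).congr (hI ▸ hrep)
  have hpointwise : ∀ q ∈ Icc (0 : ℝ) 1,
      √(p' q * F q + p q * f q) ≤ (1 + p q) / 2 * s q + p' q * Φ q / 2 := by
    intro q hq
    have hfq : s q ^ 2 = f q := Real.sq_sqrt (hf0.trans (hf ⟨le_rfl, zero_le_one⟩ hq hq.1))
    rw [← hfq]
    exact sqrt_add_le_of_le_mul (Real.sqrt_nonneg _)
      (integral_nonneg hq.1 fun _ _ => Real.sqrt_nonneg _) (hp0 q hq) (hp'0 q)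
      ((hF q hq).trans (integral_le_integral_sqrt_mul_sqrt hq.1
        (hf.mono (Icc_subset_Icc_right hq.2)) hf0))
  have hparts : ∫ q in 0..1, p' q * Φ q = ∫ q in 0..1, s q * (1 - p q) := by
    rw [integral_mul_integral_swap hp'I hs]
    refine integral_congr fun q hq => ?_
    rw [← integral_interval_sub_left hp'I (hp'I.mono_set (uIcc_subset_uIcc_left hq))]
    linear_combination s q * hrep q (hI ▸ hq) + s q * (hrep 1 ⟨zero_le_one, le_rfl⟩).symm.trans hp1
  have hsp : IntervalIntegrable (fun q => (1 + p q) / 2 * s q) volume 0 1 :=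
    hs.continuousOn_mul ((continuousOn_const.add hp).div_const 2)
  have hsp' : IntervalIntegrable (fun q => s q * (1 - p q) / 2) volume 0 1 :=
    (hs.mul_continuousOn (continuousOn_const.sub hp)).div_const 2
  have hp'Φ : IntervalIntegrable (fun q => p' q * Φ q / 2) volume 0 1 :=
    (hp'I.mul_continuousOn hΦ).div_const 2
  calc ∫ q in 0..1, √(p' q * F q + p q * f q)
      ≤ ∫ q in 0..1, ((1 + p q) / 2 * s q + p' q * Φ q / 2) :=
        integral_mono_on_of_nonneg zero_le_one (fun _ _ => Real.sqrt_nonneg _) (hsp.add hp'Φ)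
          hpointwise
    _ = ∫ q in 0..1, ((1 + p q) / 2 * s q + s q * (1 - p q) / 2) := by
        rw [integral_add hsp hp'Φ, integral_add hsp hsp', intervalIntegral.integral_div,
          intervalIntegral.integral_div, hparts]
    _ = ∫ q in 0..1, s q := integral_congr fun q _ => by ring

theorem stmt_7_general (c : ℕ → ℝ) (hc : ∀ k, 0 ≤ c k)
    (hsum : Summable (fun k : ℕ => ((k : ℝ) + 2) * ((k : ℝ) + 1) * c k)) :
    IsGreatest
      {E : ℝ | ∃ p p' : ℝ → ℝ,
        (∀ q ∈ Set.Icc (0:ℝ) 1, p q ∈ Set.Icc (0:ℝ) 1) ∧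
        p 1 = 1 ∧
        (∀ q, 0 ≤ p' q) ∧
        IntegrableOn p' (Set.Icc (0:ℝ) 1) ∧
        (∀ q ∈ Set.Icc (0:ℝ) 1, p q = p 0 + ∫ t in (0:ℝ)..q, p' t) ∧
        E = ∫ q in (0:ℝ)..1, Real.sqrt (p' q * xiOne' c q + p q * xiOne'' c q)}
      (∫ q in (0:ℝ)..1, Real.sqrt (xiOne'' c q)) := by
  refine ⟨⟨fun _ => 1, fun _ => 0, fun _ _ => ⟨zero_le_one, le_rfl⟩, rfl, fun _ => le_rfl,
    integrableOn_zero, fun _ _ => by simp, by simp⟩, ?_⟩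
  rintro E ⟨p, p', hp, hp1, hp'0, hp', hrep, rfl⟩
  exact integral_sqrt_mul_add_mul_le_integral_sqrt (xiOne''_nonneg hc le_rfl)
    (monotoneOn_xiOne'' hc hsum)
    (fun q hq => (xiOne'_eq_integral hc hsum hq).le) (fun q hq => (hp q hq).1) hp1 hp'0 hp' hrep

/-- Direct solution of the algorithmic variational principle for single-species models
without external field: over all nondecreasing absolutely continuous `p : [0,1] → [0,1]`
with `p(1) = 1` (encoded by a nonnegative integrable density `p'` with
`p(q) = p(0) + ∫₀^q p'`), the quantity `∫₀¹ √((p ξ')'(q)) dq` — where a.e.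
`(p ξ')' = p' ξ' + p ξ''` — has greatest value `∫₀¹ √(ξ''(q)) dq`, attained at `p ≡ 1`
(i.e. `p' ≡ 0`, which witnesses the membership part of `IsGreatest`). -/
theorem stmt_7 (c : ℕ → ℝ) (hc : ∀ k, 0 ≤ c k)
    (hsum : Summable (fun k : ℕ => ((k : ℝ) + 2) * ((k : ℝ) + 1) * c k))
    (hne : ∃ k, 0 < c k) :
    IsGreatest
      {E : ℝ | ∃ p p' : ℝ → ℝ,
        (∀ q ∈ Set.Icc (0:ℝ) 1, p q ∈ Set.Icc (0:ℝ) 1) ∧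
        p 1 = 1 ∧
        (∀ q, 0 ≤ p' q) ∧
        IntegrableOn p' (Set.Icc (0:ℝ) 1) ∧
        (∀ q ∈ Set.Icc (0:ℝ) 1, p q = p 0 + ∫ t in (0:ℝ)..q, p' t) ∧
        E = ∫ q in (0:ℝ)..1, Real.sqrt (p' q * xiOne' c q + p q * xiOne'' c q)}
      (∫ q in (0:ℝ)..1, Real.sqrt (xiOne'' c q)) :=
  stmt_7_general c hc hsum
end

section
/- (Quantitative Gram–Schmidt on the sphere.) Let y¹, …, y^k ∈ ℝ^N each have norm √N and satisfy |⟨yⁱ, yʲ⟩| ≤ N^{2/3} for all i ≠ j. Then there exist pairwise orthogonal z¹, …, z^k, each of norm √N, with span(z¹, …, z^k) = span(y¹, …, y^k) and ⟨yⁱ, zⁱ⟩ ≥ N − 4k N^{1/3} for every i. -/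
/-!
Run Gram–Schmidt on the `yⁱ` and rescale. With `t = N^{1/3}`, induction along the process shows
that each Gram–Schmidt vector `gⁱ` keeps `‖gⁱ‖² ≥ N - 3(k-1)t` while every later `yᵐ` still has
`|⟪yᵐ, gⁱ⟫| ≤ (3/2)t²`: each of the at most `k - 1` projections removed from `yⁱ` costs at most
`((3/2)t²)² / ((3/4)N) = 3t`. Finally `⟪yⁱ, zⁱ⟫ = √N ‖gⁱ‖ ≥ ‖gⁱ‖²`, because `‖gⁱ‖ ≤ ‖yⁱ‖ = √N`.
-/

open scoped BigOperators RealInnerProductSpace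

open Finset InnerProductSpace

theorem three_mul_sub_one_mul_le {k t : ℝ} (hk : 1 ≤ k) (hkt : k ^ 3 ≤ t) :
    3 * (k - 1) * t ≤ t ^ 3 / 4 ∧ 3 * (k - 1) * t ≤ t ^ 2 / 2 := by
  have hk0 : 0 ≤ k - 1 := by linarith
  have ht0 : 0 ≤ t := (pow_nonneg (by linarith) 3).trans hkt
  have ht : 6 * (k - 1) ≤ t := by
    nlinarith [sq_nonneg (k - 3 / 2), mul_nonneg (mul_nonneg hk0 hk0) hk0]
  have ht' : 12 * (k - 1) ≤ t ^ 2 := by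
    have hk6 : 12 * (k - 1) ≤ (k ^ 3) ^ 2 := by
      nlinarith [sq_nonneg (k ^ 3 - 2), mul_nonneg (mul_nonneg hk0 hk0) (by linarith : 0 ≤ k + 2)]
    exact hk6.trans (pow_le_pow_left₀ (by positivity) hkt 2)
  constructor <;> nlinarith [mul_le_mul_of_nonneg_left ht' ht0]

namespace InnerProductSpace

variable {E : Type*} [NormedAddCommGroup E] [InnerProductSpace ℝ E]
  {ι : Type*} [LinearOrder ι] [LocallyFiniteOrderBot ι] [WellFoundedLT ι]

theorem real_inner_gramSchmidt_right (f : ι → E) (i : ι) (w : E) :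
    ⟪w, gramSchmidt ℝ f i⟫ = ⟪w, f i⟫ - ∑ j ∈ Iio i,
      ⟪gramSchmidt ℝ f j, f i⟫ / ‖gramSchmidt ℝ f j‖ ^ 2 * ⟪w, gramSchmidt ℝ f j⟫ := by
  have h := congrArg (⟪w, ·⟫) (gramSchmidt_def'' ℝ f i)
  simp only [inner_add_right, inner_sum, real_inner_smul_right, RCLike.ofReal_real_eq_id,
    id_eq] at h
  linarith

theorem real_inner_gramSchmidt_self (f : ι → E) (i : ι) :
    ⟪f i, gramSchmidt ℝ f i⟫ = ‖gramSchmidt ℝ f i‖ ^ 2 := by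
  have h := real_inner_gramSchmidt_right f i (gramSchmidt ℝ f i)
  rw [sum_eq_zero fun j hj => by rw [gramSchmidt_orthogonal ℝ f (mem_Iio.1 hj).ne', mul_zero],
    sub_zero, real_inner_self_eq_norm_sq] at h
  rw [real_inner_comm, h]

theorem norm_gramSchmidt_le (f : ι → E) (i : ι) : ‖gramSchmidt ℝ f i‖ ≤ ‖f i‖ := by
  have h : ‖gramSchmidt ℝ f i‖ * ‖gramSchmidt ℝ f i‖ ≤ ‖f i‖ * ‖gramSchmidt ℝ f i‖ := by
    rw [← sq, ← real_inner_gramSchmidt_self]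
    exact real_inner_le_norm _ _
  rcases (norm_nonneg (gramSchmidt ℝ f i)).eq_or_lt with h0 | h0
  · rw [← h0]
    exact norm_nonneg _
  · exact le_of_mul_le_mul_right h h0

theorem real_inner_gramSchmidtNormed_self (f : ι → E) (i : ι) :
    ⟪f i, gramSchmidtNormed ℝ f i⟫ = ‖gramSchmidt ℝ f i‖ := by
  rw [gramSchmidtNormed, real_inner_smul_right, real_inner_gramSchmidt_self,
    RCLike.ofReal_real_eq_id, id_eq, sq, ← mul_assoc, inv_mul_mul_self]

theorem abs_sum_gramSchmidt_coeff_mul_le {N β : ℝ} (hN : 0 < N) (f : ι → E) (i : ι) (w : E)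
    (hg : ∀ j < i, 3 / 4 * N ≤ ‖gramSchmidt ℝ f j‖ ^ 2)
    (hfi : ∀ j < i, |⟪f i, gramSchmidt ℝ f j⟫| ≤ 3 / 2 * β)
    (hw : ∀ j < i, |⟪w, gramSchmidt ℝ f j⟫| ≤ 3 / 2 * β) :
    |∑ j ∈ Iio i, ⟪gramSchmidt ℝ f j, f i⟫ / ‖gramSchmidt ℝ f j‖ ^ 2 * ⟪w, gramSchmidt ℝ f j⟫|
      ≤ #(Iio i) * (3 * β ^ 2 / N) := by
  refine (abs_sum_le_sum_abs _ _).trans ?_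
  rw [← nsmul_eq_mul]
  refine sum_le_card_nsmul _ _ _ fun j hj => ?_
  have hji := mem_Iio.1 hj
  have hgpos : 0 < ‖gramSchmidt ℝ f j‖ ^ 2 := by linarith [hg j hji]
  have hβ : 0 ≤ 3 / 2 * β := (abs_nonneg _).trans (hw j hji)
  calc |⟪gramSchmidt ℝ f j, f i⟫ / ‖gramSchmidt ℝ f j‖ ^ 2 * ⟪w, gramSchmidt ℝ f j⟫|
      = |⟪f i, gramSchmidt ℝ f j⟫| * |⟪w, gramSchmidt ℝ f j⟫| / ‖gramSchmidt ℝ f j‖ ^ 2 := by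
        rw [abs_mul, abs_div, abs_of_pos hgpos, real_inner_comm]
        ring
    _ ≤ 3 / 2 * β * (3 / 2 * β) / (3 / 4 * N) :=
        div_le_div₀ (by positivity) (mul_le_mul (hfi j hji) (hw j hji) (abs_nonneg _) hβ)
          (by positivity) (hg j hji)
    _ = 3 * β ^ 2 / N := by field_simp; ring

theorem le_sq_norm_gramSchmidt_and_abs_inner_le [Fintype ι] {N β : ℝ} (hN : 0 < N) (f : ι → E)
    (hf : ∀ i, ⟪f i, f i⟫ = N) (hfij : ∀ i j, i ≠ j → |⟪f i, f j⟫| ≤ β)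
    (hεN : (Fintype.card ι - 1) * (3 * β ^ 2 / N) ≤ N / 4)
    (hεβ : (Fintype.card ι - 1) * (3 * β ^ 2 / N) ≤ β / 2) (i : ι) :
    N - (Fintype.card ι - 1) * (3 * β ^ 2 / N) ≤ ‖gramSchmidt ℝ f i‖ ^ 2 ∧
      ∀ m, i < m → |⟪f m, gramSchmidt ℝ f i⟫| ≤ 3 / 2 * β := by
  set ε := (Fintype.card ι - 1 : ℝ) * (3 * β ^ 2 / N)
  induction i using WellFoundedLT.induction with
  | ind i ih =>
  have hsum : ∀ w : E, (∀ j < i, |⟪w, gramSchmidt ℝ f j⟫| ≤ 3 / 2 * β) →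
      |∑ j ∈ Iio i, ⟪gramSchmidt ℝ f j, f i⟫ / ‖gramSchmidt ℝ f j‖ ^ 2 *
        ⟪w, gramSchmidt ℝ f j⟫| ≤ ε := by
    intro w hw
    refine (abs_sum_gramSchmidt_coeff_mul_le hN f i w (fun j hj => ?_)
      (fun j hj => (ih j hj).2 i hj) hw).trans ?_
    · linarith [(ih j hj).1]
    · have hcard : #(Iio i) < Fintype.card ι := card_lt_univ_of_notMem (x := i) (by simp)
      have hcard' : (#(Iio i) : ℝ) ≤ Fintype.card ι - 1 := by
        rw [le_sub_iff_add_le]; exact_mod_cast hcard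
      exact mul_le_mul_of_nonneg_right hcard' (by positivity)
  constructor
  · have h := hsum (f i) fun j hj => (ih j hj).2 i hj
    rw [← real_inner_gramSchmidt_self, real_inner_gramSchmidt_right, hf]
    linarith [le_abs_self (∑ j ∈ Iio i, ⟪gramSchmidt ℝ f j, f i⟫ / ‖gramSchmidt ℝ f j‖ ^ 2 *
        ⟪f i, gramSchmidt ℝ f j⟫)]
  · intro m hm
    have h := hsum (f m) fun j hj => (ih j hj).2 m (hj.trans hm)
    rw [real_inner_gramSchmidt_right]
    linarith [abs_sub (⟪f m, f i⟫) (∑ j ∈ Iio i, ⟪gramSchmidt ℝ f j, f i⟫ /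
      ‖gramSchmidt ℝ f j‖ ^ 2 * ⟪f m, gramSchmidt ℝ f j⟫), hfij m i hm.ne']

theorem exists_rescaled_gramSchmidt {c : ℝ} (hc : 0 < c) (f : ι → E)
    (hf : ∀ i, gramSchmidt ℝ f i ≠ 0) :
    ∃ z : ι → E, (∀ i, ‖z i‖ = c) ∧ (∀ i j, i ≠ j → ⟪z i, z j⟫ = 0) ∧
      Submodule.span ℝ (Set.range z) = Submodule.span ℝ (Set.range f) ∧
      ∀ i, ⟪f i, z i⟫ = c * ‖gramSchmidt ℝ f i‖ := by
  refine ⟨fun i => c • gramSchmidtNormed ℝ f i, fun i => ?_, fun i j hij => ?_, ?_, fun i => ?_⟩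
  · rw [norm_smul, gramSchmidtNormed, norm_smul_inv_norm (hf i), Real.norm_of_nonneg hc.le,
      mul_one]
  · simp only [real_inner_smul_left, real_inner_smul_right, gramSchmidtNormed,
      gramSchmidt_orthogonal ℝ f hij, mul_zero]
  · rw [Set.range_smul, Submodule.span_smul_eq_of_isUnit _ _ hc.ne'.isUnit,
      span_gramSchmidtNormed_range, span_gramSchmidt]
  · rw [real_inner_smul_right, real_inner_gramSchmidtNormed_self]

end InnerProductSpace

/-- Quantitative Gram–Schmidt on the sphere: if `y¹, …, y^k ∈ ℝ^N` each have norm `√N`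
and `|⟨yⁱ, yʲ⟩| ≤ N^{2/3}` for `i ≠ j` (with `N` large enough, e.g. `k³ ≤ N^{1/3}`),
then there are pairwise orthogonal `z¹, …, z^k` of norm `√N` with the same span and
`⟨yⁱ, zⁱ⟩ ≥ N − 4 k N^{1/3}` for every `i`. -/
theorem stmt_9 (N k : ℕ) (hk : 0 < k) (hN : ((k : ℝ)) ^ 3 ≤ (N : ℝ) ^ ((1 : ℝ) / 3))
    (y : Fin k → EuclideanSpace ℝ (Fin N))
    (hnorm : ∀ i, ‖y i‖ = Real.sqrt N)
    (hip : ∀ i j, i ≠ j → |⟪y i, y j⟫| ≤ (N : ℝ) ^ ((2 : ℝ) / 3)) :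
    ∃ z : Fin k → EuclideanSpace ℝ (Fin N),
      (∀ i, ‖z i‖ = Real.sqrt N) ∧
      (∀ i j, i ≠ j → ⟪z i, z j⟫ = 0) ∧
      Submodule.span ℝ (Set.range z) = Submodule.span ℝ (Set.range y) ∧
      ∀ i, (N : ℝ) - 4 * k * (N : ℝ) ^ ((1 : ℝ) / 3) ≤ ⟪y i, z i⟫ := by
  have hk1 : (1 : ℝ) ≤ k := by exact_mod_cast hk
  have hNpos : (0 : ℝ) < N := by
    refine (Nat.cast_nonneg N).lt_of_ne fun h0 => ?_
    rw [← h0, Real.zero_rpow (by norm_num)] at hN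
    linarith [one_le_pow₀ (n := 3) hk1]
  set t : ℝ := (N : ℝ) ^ ((1 : ℝ) / 3)
  have ht3 : t ^ 3 = N := by
    rw [← Real.rpow_natCast, ← Real.rpow_mul hNpos.le]; norm_num
  have hβ : (N : ℝ) ^ ((2 : ℝ) / 3) = t ^ 2 := by
    rw [← Real.rpow_natCast, ← Real.rpow_mul hNpos.le]; norm_num
  have htpos : 0 < t := by positivity
  have hε : ((Fintype.card (Fin k) : ℝ) - 1) * (3 * (t ^ 2) ^ 2 / N) = 3 * (k - 1) * t := by
    rw [Fintype.card_fin, ← ht3]; field_simp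
  obtain ⟨hεN, hεβ⟩ := three_mul_sub_one_mul_le hk1 hN
  have hy i : ⟪y i, y i⟫ = N := by
    rw [real_inner_self_eq_norm_sq, hnorm, Real.sq_sqrt hNpos.le]
  have hg i : N - 3 * (k - 1) * t ≤ ‖gramSchmidt ℝ y i‖ ^ 2 := by
    have := (le_sq_norm_gramSchmidt_and_abs_inner_le hNpos y hy (hβ ▸ hip)
      (by rwa [hε, ← ht3]) (by rwa [hε]) i).1
    rwa [hε] at this
  have hg0 i : gramSchmidt ℝ y i ≠ 0 := fun h => by
    have := hg i
    rw [h, norm_zero] at this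
    nlinarith
  obtain ⟨z, hz_norm, hz_orth, hz_span, hz_inner⟩ :=
    exists_rescaled_gramSchmidt (Real.sqrt_pos.2 hNpos) y hg0
  refine ⟨z, hz_norm, hz_orth, hz_span, fun i => ?_⟩
  calc (N : ℝ) - 4 * k * t ≤ N - 3 * (k - 1) * t := by nlinarith
    _ ≤ ‖gramSchmidt ℝ y i‖ * ‖gramSchmidt ℝ y i‖ := (sq (‖gramSchmidt ℝ y i‖)) ▸ hg i
    _ ≤ √N * ‖gramSchmidt ℝ y i‖ :=
      mul_le_mul_of_nonneg_right (hnorm i ▸ norm_gramSchmidt_le y i) (norm_nonneg _)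
    _ = ⟪y i, z i⟫ := (hz_inner i).symm
end

section
/- Let M be a compact set of entrywise nonnegative r×r matrices, each having 1 as a simple eigenvalue with (unique up to scaling) eigenvector the all-ones vector 1, this being the Perron–Frobenius eigenvalue. Then there is a constant c > 0 such that for every M ∈ M and every v ∈ ℝ^r with Σ_s v_s = 0, the positive part of (M − I)v satisfies ‖((M − I)v)₊‖₁ ≥ c ‖v‖₁, and likewise for the negative part. -/
open Matrix

/-! Pairing `(M - I) v` with a strictly positive left fixed vector `u` of `M` gives `0`, so
`(M - I) v` has a positive entry unless it vanishes; and if it vanishes, `v` is a fixed vector,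
hence constant, hence `0` when its entries sum to `0`. So the ℓ¹ mass of the positive part of
`(M - I) v` is a continuous function of `(M, v)`, positive on the compact set of pairs with
`M ∈ 𝓜` and `v` a sup-norm unit vector of zero sum (the ℓ¹ norm is at most `r` times the
sup norm); its minimum there is the constant, by homogeneity
in `v`. The negative part of `(M - I) v` is the positive part of `(M - I) (-v)`. -/

theorem exists_pos_mul_norm_le_of_isCompact {X E : Type*} [TopologicalSpace X]
    [NormedAddCommGroup E] [NormedSpace ℝ E] [FiniteDimensional ℝ E]
    {K : Set X} (hK : IsCompact K) (V : Submodule ℝ E) {f : X → E → ℝ}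
    (hf : Continuous (Function.uncurry f))
    (hhom : ∀ x v, ∀ t : ℝ, 0 ≤ t → f x (t • v) = t * f x v)
    (hpos : ∀ x ∈ K, ∀ v ∈ V, v ≠ 0 → 0 < f x v) :
    ∃ c > 0, ∀ x ∈ K, ∀ v ∈ V, c * ‖v‖ ≤ f x v := by
  have hS : IsCompact (K ×ˢ ((V : Set E) ∩ Metric.sphere 0 1)) :=
    hK.prod ((isCompact_sphere 0 1).inter_left V.closed_of_finiteDimensional)
  obtain ⟨c, hc, hcf⟩ := hS.exists_forall_le' hf.continuousOn (a := 0) <| by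
    rintro ⟨x, v⟩ ⟨hx, hv, hv1⟩
    exact hpos x hx v hv (ne_zero_of_mem_unit_sphere ⟨v, hv1⟩)
  refine ⟨c, hc, fun x hx v hv => ?_⟩
  rcases eq_or_ne v 0 with rfl | hv0
  · have hf0 : f x 0 = 0 := by simpa using hhom x 0 0 le_rfl
    simp [hf0]
  · have hnorm : 0 < ‖v‖ := norm_pos_iff.mpr hv0
    have hunit := hcf (x, ‖v‖⁻¹ • v) ⟨hx, V.smul_mem _ hv, by simp [norm_smul, hnorm.ne']⟩
    rw [Function.uncurry_apply_pair, hhom _ _ _ (by positivity)] at hunit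
    calc c * ‖v‖ ≤ ‖v‖⁻¹ * f x v * ‖v‖ := by gcongr
      _ = f x v := by field_simp

section FixedVector

variable {ι : Type*} [Fintype ι]

theorem exists_pos_of_dotProduct_eq_zero {u w : ι → ℝ} (hu : ∀ i, 0 < u i)
    (h : u ⬝ᵥ w = 0) (hw : w ≠ 0) : ∃ i, 0 < w i := by
  by_contra! hle
  refine hw (funext fun i => ?_)
  have hterm := (Finset.sum_eq_zero_iff_of_nonpos fun j _ =>
    mul_nonpos_of_nonneg_of_nonpos (hu j).le (hle j)).mp h i (Finset.mem_univ i)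
  exact (mul_eq_zero.mp hterm).resolve_left (hu i).ne'

theorem mulVec_sub_self_ne_zero {M : Matrix ι ι ℝ}
    (hfix : ∀ w, M *ᵥ w = w → ∃ t : ℝ, w = fun _ => t)
    {v : ι → ℝ} (hv : ∑ i, v i = 0) (hv0 : v ≠ 0) : M *ᵥ v - v ≠ 0 := by
  intro h
  obtain ⟨t, rfl⟩ := hfix v (sub_eq_zero.mp h)
  have : Nonempty ι := not_isEmpty_iff.mp fun _ => hv0 (Subsingleton.elim _ _)
  simp only [Finset.sum_const, Finset.card_univ, nsmul_eq_mul, mul_eq_zero, Nat.cast_eq_zero,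
    Fintype.card_ne_zero, false_or] at hv
  exact hv0 (funext fun _ => hv)

theorem sum_max_mulVec_sub_self_pos {M : Matrix ι ι ℝ}
    (hfix : ∀ w, M *ᵥ w = w → ∃ t : ℝ, w = fun _ => t)
    {u : ι → ℝ} (hu : ∀ i, 0 < u i) (huM : u ᵥ* M = u)
    {v : ι → ℝ} (hv : ∑ i, v i = 0) (hv0 : v ≠ 0) :
    0 < ∑ i, max ((M *ᵥ v - v) i) 0 := by
  obtain ⟨i, hi⟩ := exists_pos_of_dotProduct_eq_zero hu
    (by rw [dotProduct_sub, dotProduct_mulVec, huM, sub_self])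
    (mulVec_sub_self_ne_zero hfix hv hv0)
  exact Finset.sum_pos' (fun j _ => le_max_right _ _) ⟨i, Finset.mem_univ i, lt_max_of_lt_left hi⟩

end FixedVector

theorem stmt_10_general (r : ℕ) (𝓜 : Set (Matrix (Fin r) (Fin r) ℝ))
    (hcomp : IsCompact 𝓜)
    (hsimple : ∀ M ∈ 𝓜, ∀ w : Fin r → ℝ, M.mulVec w = w → ∃ t : ℝ, w = fun _ => t)
    (hleft : ∀ M ∈ 𝓜, ∃ u : Fin r → ℝ, (∀ s, 0 < u s) ∧ Matrix.vecMul u M = u) :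
    ∃ c : ℝ, 0 < c ∧ ∀ M ∈ 𝓜, ∀ v : Fin r → ℝ, (∑ s, v s = 0) →
      c * ∑ s, |v s| ≤ ∑ s, max (M.mulVec v s - v s) 0 ∧
      c * ∑ s, |v s| ≤ ∑ s, max (-(M.mulVec v s - v s)) 0 := by
  set V : Submodule ℝ (Fin r → ℝ) := LinearMap.ker (∑ i, LinearMap.proj i)
  have hV : ∀ v, v ∈ V ↔ ∑ s, v s = 0 := by simp [V]
  obtain ⟨c, hc, hcf⟩ := exists_pos_mul_norm_le_of_isCompact hcomp V
    (f := fun M v => ∑ s, max ((M *ᵥ v - v) s) 0) (by fun_prop)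
    (fun M v t ht => by
      simp only [mulVec_smul, ← smul_sub, Pi.smul_apply, smul_eq_mul,
        mul_max_of_nonneg _ _ ht, mul_zero, Finset.mul_sum])
    (fun M hM v hv hv0 => by
      obtain ⟨u, hu, huM⟩ := hleft M hM
      exact sum_max_mulVec_sub_self_pos (hsimple M hM) hu huM ((hV v).1 hv) hv0)
  have hl1 : ∀ v : Fin r → ℝ, c / (r + 1) * ∑ s, |v s| ≤ c * ‖v‖ := fun v =>
    calc c / (r + 1) * ∑ s, |v s| ≤ c / (r + 1) * (r * ‖v‖) := by
          gcongr; simpa using Pi.sum_norm_apply_le_norm v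
      _ ≤ c * ‖v‖ := by
          rw [div_mul_eq_mul_div, div_le_iff₀ (by positivity)]; nlinarith [norm_nonneg v]
  refine ⟨c / (r + 1), by positivity, fun M hM v hv => ⟨?_, ?_⟩⟩
  · exact (hl1 v).trans (hcf M hM v ((hV v).2 hv))
  · have hneg := hcf M hM (-v) (V.neg_mem ((hV v).2 hv))
    simp only [mulVec_neg, norm_neg, Pi.sub_apply, Pi.neg_apply, neg_sub_neg] at hneg
    simpa only [neg_sub] using (hl1 v).trans hneg

/-- Lemma: let `𝓜` be a compact set of entrywise nonnegative row-stochastic `r × r`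
matrices, each having `1` as a simple Perron–Frobenius eigenvalue with right eigenvector
the all-ones vector (one-dimensional eigenspace) and a strictly positive left
eigenvector.  Then there is `c > 0` such that for every `M ∈ 𝓜` and every `v` with
`Σ_s v_s = 0`, both the positive and the negative part of `(M − I) v` have `ℓ¹`-norm at
least `c ‖v‖₁`. -/
theorem stmt_10 (r : ℕ) (𝓜 : Set (Matrix (Fin r) (Fin r) ℝ))
    (hcomp : IsCompact 𝓜)
    (hpos : ∀ M ∈ 𝓜, ∀ i j, 0 ≤ M i j)
    (hstoch : ∀ M ∈ 𝓜, M.mulVec (fun _ => 1) = fun _ => 1)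
    (hsimple : ∀ M ∈ 𝓜, ∀ w : Fin r → ℝ, M.mulVec w = w → ∃ t : ℝ, w = fun _ => t)
    (hleft : ∀ M ∈ 𝓜, ∃ u : Fin r → ℝ, (∀ s, 0 < u s) ∧ Matrix.vecMul u M = u) :
    ∃ c : ℝ, 0 < c ∧ ∀ M ∈ 𝓜, ∀ v : Fin r → ℝ, (∑ s, v s = 0) →
      c * ∑ s, |v s| ≤ ∑ s, max (M.mulVec v s - v s) 0 ∧
      c * ∑ s, |v s| ≤ ∑ s, max (-(M.mulVec v s - v s)) 0 :=
  stmt_10_general r 𝓜 hcomp hsimple hleft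
end

section
/- (Barycenter bound for locally constrained ultrametric trees.) Let T be the complete k-ary tree of depth D with leaves L, and suppose vectors ρ(u) ∈ ℝ^N, u ∈ T, satisfy: for every internal node u and children u1, …, uk, the Gram identities ⟨ρ(ui) − ρ(u), ρ(uj) − ρ(u)⟩ = 0 for i ≠ j and ‖ρ(ui) − ρ(u)‖₂² = (q_{d+1} − q_d) N when |u| = d, where 0 ≤ q₀ ≤ q₁ ≤ ⋯ ≤ q_D ≤ 1. Then the root satisfies ‖ρ(∅) − (1/k^D) Σ_{u∈L} ρ(u)‖₂ ≤ √(D N / k). -/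
open scoped BigOperators RealInnerProductSpace

open Finset

/-! The barycentre of the depth-`d` vertices moves, from depth `d` to `d + 1`, by the average
over `u` of `k⁻¹ ∑ᵢ (ρ(ui) − ρ(u))`; orthogonality of these `k` increments of squared norm
`(q_{d+1} − q_d) N` makes each average have norm `√((q_{d+1} − q_d) N / k)`. Telescoping from
the root (the barycentre of depth `0`) to the leaves and applying Cauchy–Schwarz to
`∑_d √(q_{d+1} − q_d)`, whose squares telescope to `q_D − q_0 ≤ 1`, gives the bound. -/

section Orthogonal

variable {E : Type*} [NormedAddCommGroup E] [InnerProductSpace ℝ E] {ι : Type*} [Fintype ι]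

theorem norm_sum_sq_eq_sum_norm_sq {x : ι → E} (h : Pairwise fun i j ↦ ⟪x i, x j⟫ = 0) :
    ‖∑ i, x i‖ ^ 2 = ∑ i, ‖x i‖ ^ 2 := by
  rw [← real_inner_self_eq_norm_sq, sum_inner]
  refine sum_congr rfl fun i _ ↦ ?_
  rw [inner_sum, sum_eq_single i (fun j _ hji ↦ h hji.symm) (by simp),
    real_inner_self_eq_norm_sq]

theorem norm_inv_card_smul_sum_sq_of_pairwise_inner_eq_zero {x : ι → E} {c : ℝ}
    (h : Pairwise fun i j ↦ ⟪x i, x j⟫ = 0) (hc : ∀ i, ‖x i‖ ^ 2 = c) :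
    ‖(Fintype.card ι : ℝ)⁻¹ • ∑ i, x i‖ ^ 2 = c / Fintype.card ι := by
  rw [norm_smul, mul_pow, norm_sum_sq_eq_sum_norm_sq h]
  simp only [hc, sum_const, card_univ, nsmul_eq_mul, norm_inv, RCLike.norm_natCast]
  rcases eq_or_ne (Fintype.card ι : ℝ) 0 with h0 | h0
  · simp [h0]
  · field_simp

end Orthogonal

theorem Fin.sum_univ_pi_snoc {M α : Type*} [AddCommMonoid M] [Fintype α] {d : ℕ}
    (f : (Fin (d + 1) → α) → M) :
    ∑ v, f v = ∑ u : Fin d → α, ∑ i, f (Fin.snoc u i) := by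
  rw [← Fintype.sum_equiv (Fin.snocEquiv fun _ ↦ α) (fun p ↦ f (Fin.snoc p.2 p.1)) f
    fun _ ↦ rfl, Fintype.sum_prod_type, sum_comm]

theorem sum_sqrt_sub_le_sqrt_mul {q : ℕ → ℝ} {n : ℕ} (hq : ∀ d < n, q d ≤ q (d + 1)) :
    ∑ d ∈ range n, √(q (d + 1) - q d) ≤ √(n * (q n - q 0)) := by
  have h := Real.sum_mul_le_sqrt_mul_sqrt (range n) (fun _ ↦ 1) fun d ↦ √(q (d + 1) - q d)
  rw [sum_congr rfl fun d hd ↦ Real.sq_sqrt (sub_nonneg.2 (hq d (mem_range.1 hd))),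
    sum_range_sub q, ← Real.sqrt_mul (by positivity)] at h
  simpa using h

section LevelMean

variable {E : Type*} [AddCommGroup E] [Module ℝ E] {k d : ℕ}

noncomputable def levelMean (f : (Fin d → Fin k) → E) : E :=
  ((k : ℝ) ^ d)⁻¹ • ∑ u, f u

theorem levelMean_zero (f : (Fin 0 → Fin k) → E) : levelMean f = f (fun i ↦ i.elim0) := by
  simp only [levelMean, pow_zero, inv_one, one_smul, Fintype.sum_unique]
  exact congrArg f (Subsingleton.elim _ _)

theorem levelMean_succ_sub (hk : k ≠ 0) (ρ' : (Fin (d + 1) → Fin k) → E)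
    (ρ : (Fin d → Fin k) → E) :
    levelMean ρ' - levelMean ρ =
      ((k : ℝ) ^ d)⁻¹ • ∑ u, (k : ℝ)⁻¹ • ∑ i, (ρ' (Fin.snoc u i) - ρ u) := by
  have hk' : (k : ℝ) ≠ 0 := Nat.cast_ne_zero.2 hk
  simp only [levelMean, Fin.sum_univ_pi_snoc ρ', sum_sub_distrib, sum_const, card_univ,
    Fintype.card_fin, smul_sub, smul_sum, smul_smul, pow_succ, mul_inv,
    ← Nat.cast_smul_eq_nsmul ℝ, inv_mul_cancel₀ hk', mul_one]

end LevelMean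

theorem norm_levelMean_succ_sub_le {E : Type*} [NormedAddCommGroup E] [InnerProductSpace ℝ E]
    {k d : ℕ} (hk : k ≠ 0) {ρ' : (Fin (d + 1) → Fin k) → E}
    {ρ : (Fin d → Fin k) → E} {c : ℝ}
    (horth : ∀ u, Pairwise fun i j ↦ ⟪ρ' (Fin.snoc u i) - ρ u, ρ' (Fin.snoc u j) - ρ u⟫ = 0)
    (hnorm : ∀ u i, ‖ρ' (Fin.snoc u i) - ρ u‖ ^ 2 = c) :
    ‖levelMean ρ' - levelMean ρ‖ ≤ √(c / k) := by
  have hchild : ∀ u, ‖(k : ℝ)⁻¹ • ∑ i, (ρ' (Fin.snoc u i) - ρ u)‖ = √(c / k) := fun u ↦ by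
    simpa using congrArg Real.sqrt
      (norm_inv_card_smul_sum_sq_of_pairwise_inner_eq_zero (horth u) (hnorm u))
  have hpow : (0 : ℝ) < (k : ℝ) ^ d := by positivity
  calc ‖levelMean ρ' - levelMean ρ‖
      ≤ ((k : ℝ) ^ d)⁻¹ * ∑ u : Fin d → Fin k, ‖(k : ℝ)⁻¹ • ∑ i, (ρ' (Fin.snoc u i) - ρ u)‖ := by
        rw [levelMean_succ_sub hk, norm_smul, norm_inv, Real.norm_of_nonneg hpow.le]
        gcongr
        exact norm_sum_le _ _
    _ = √(c / k) := by
        simp only [hchild, sum_const, card_univ, Fintype.card_fun, Fintype.card_fin, nsmul_eq_mul]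
        push_cast
        exact inv_mul_cancel_left₀ hpow.ne' _

/-- Barycenter bound for locally constrained ultrametric trees.  Vertices at depth `d`
of the complete `k`-ary tree of depth `D` are indexed by functions `Fin d → Fin k`, a
child of `u` being `Fin.snoc u i`.  If sibling increments `ρ(ui) − ρ(u)` are pairwise
orthogonal with squared norms `(q_{d+1} − q_d) N` for a nondecreasing sequence
`0 ≤ q₀ ≤ ⋯ ≤ q_D ≤ 1`, then the root is within `√(D N / k)` of the barycenter of the
leaves. -/
theorem stmt_13 (N k D : ℕ) (hk : 0 < k)
    (q : ℕ → ℝ) (hq0 : 0 ≤ q 0) (hqD : q D ≤ 1)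
    (hmono : ∀ d, d < D → q d ≤ q (d + 1))
    (ρ : (d : ℕ) → (Fin d → Fin k) → EuclideanSpace ℝ (Fin N))
    (horth : ∀ d, d < D → ∀ u : Fin d → Fin k, ∀ i j : Fin k, i ≠ j →
      ⟪ρ (d + 1) (Fin.snoc u i) - ρ d u, ρ (d + 1) (Fin.snoc u j) - ρ d u⟫ = 0)
    (hnorm : ∀ d, d < D → ∀ u : Fin d → Fin k, ∀ i : Fin k,
      ‖ρ (d + 1) (Fin.snoc u i) - ρ d u‖ ^ 2 = (q (d + 1) - q d) * N) :
    ‖ρ 0 (fun i => i.elim0) - (1 / (k : ℝ) ^ D) • ∑ u : Fin D → Fin k, ρ D u‖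
      ≤ Real.sqrt (D * N / k) := by
  set b : ℕ → EuclideanSpace ℝ (Fin N) := fun d ↦ levelMean (ρ d)
  have hstep : ∀ d < D, dist (b d) (b (d + 1)) ≤ √(q (d + 1) - q d) * √(N / k) := by
    intro d hd
    rw [dist_comm, dist_eq_norm, ← Real.sqrt_mul (sub_nonneg.2 (hmono d hd)), ← mul_div_assoc]
    exact norm_levelMean_succ_sub_le hk.ne' (fun u _ _ ↦ horth d hd u _ _) (hnorm d hd)
  rw [← levelMean_zero (ρ 0), one_div, ← dist_eq_norm]
  calc dist (b 0) (b D)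
      ≤ ∑ d ∈ range D, dist (b d) (b (d + 1)) := dist_le_range_sum_dist b D
    _ ≤ (∑ d ∈ range D, √(q (d + 1) - q d)) * √(N / k) := by
        rw [sum_mul]
        exact sum_le_sum fun d hd ↦ hstep d (mem_range.1 hd)
    _ ≤ √(D * 1) * √(N / k) := by
        gcongr
        refine (sum_sqrt_sub_le_sqrt_mul hmono).trans (Real.sqrt_le_sqrt ?_)
        gcongr
        linarith
    _ = √(D * N / k) := by rw [mul_one, ← Real.sqrt_mul (by positivity), mul_div_assoc]
end

section
/- (Perturbed Gram–Schmidt stability.) Let 0 < q₀ ≤ q ≤ 1 and q', ε ∈ [0,1], and suppose x, y¹, …, y^k ∈ ℝ^N satisfy: ‖x‖² = q, ‖yⁱ‖² = q' + E_{ii} and |⟨yⁱ, yʲ⟩| ≤ ε for i ≠ j and |⟨x, yⁱ⟩| ≤ ε, with |E_{ii}| ≤ ε. Then there exist z¹, …, z^k with ‖zⁱ‖² = q' exactly, ⟨x, zⁱ⟩ = 0 and ⟨zⁱ, zʲ⟩ = 0 for i ≠ j, such that ‖zⁱ − yⁱ‖ ≤ ε'(ε, k, q₀), where ε' → 0 as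 ε → 0 for fixed k and q₀; one may take ε' = 3 k^{3/2} ε^{1/2} whenever k² ε < q₀ (and ε' = 2 otherwise). -/
open scoped BigOperators RealInnerProductSpace

/-!
Run Gram–Schmidt on `x, y¹, …, yᵏ` and rescale the normalized outputs `eⁱ` to length `√q'`.
With `s = √ε`, induction along the process gives `|⟪eⁱ, yᵐ⟫| ≤ s` for `i < m`: the residual
`gⁱ` differs from `yⁱ` by at most `i s`, so `‖gⁱ‖ > (i + 1) s` as soon as `√q' > 2 k s`, while
`|⟪gⁱ, yᵐ⟫| ≤ (i + 1) s²`. Consequently `‖√q' eⁱ - yⁱ‖ ≤ (2 k + 1/2) s`.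
When instead `√q' ≤ 2 k s`, the `yⁱ` are themselves short, and any orthogonal family of norm
`√q'` in `x^⊥`, with signs chosen so that `⟪zⁱ, yⁱ⟫ ≥ 0`, has `‖zⁱ - yⁱ‖² ≤ 2 q' + ε`.
-/

open InnerProductSpace Finset Module

section GramSchmidt

variable {E : Type*} [NormedAddCommGroup E] [InnerProductSpace ℝ E]
  {ι : Type*} [LinearOrder ι] [LocallyFiniteOrderBot ι] [WellFoundedLT ι] (f : ι → E)

theorem gramSchmidt_eq_sub_sum_inner_gramSchmidtNormed (n : ι) :
    gramSchmidt ℝ f n =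
      f n - ∑ i ∈ Iio n, ⟪gramSchmidtNormed ℝ f i, f n⟫ • gramSchmidtNormed ℝ f i := by
  rw [eq_sub_iff_add_eq, eq_comm]
  convert gramSchmidt_def'' ℝ f n using 3 with i
  rw [gramSchmidtNormed, real_inner_smul_left, smul_smul]
  congr 1
  field_simp

theorem norm_gramSchmidtNormed_le_one (n : ι) : ‖gramSchmidtNormed ℝ f n‖ ≤ 1 := by
  by_cases h : gramSchmidtNormed ℝ f n = 0
  · simp [h]
  · exact (gramSchmidtNormed_unit_length' h).le

theorem real_inner_gramSchmidtNormed_left (n : ι) (w : E) :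
    ⟪gramSchmidtNormed ℝ f n, w⟫ = ⟪gramSchmidt ℝ f n, w⟫ / ‖gramSchmidt ℝ f n‖ := by
  rw [gramSchmidtNormed, real_inner_smul_left, inv_mul_eq_div]
  rfl

theorem norm_gramSchmidt_sub_le (n : ι) :
    ‖gramSchmidt ℝ f n - f n‖ ≤ ∑ i ∈ Iio n, |⟪gramSchmidtNormed ℝ f i, f n⟫| := by
  rw [gramSchmidt_eq_sub_sum_inner_gramSchmidtNormed, sub_sub_cancel_left, norm_neg]
  refine (norm_sum_le _ _).trans (sum_le_sum fun i _ => ?_)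
  rw [norm_smul, Real.norm_eq_abs]
  exact mul_le_of_le_one_right (abs_nonneg _) (norm_gramSchmidtNormed_le_one f i)

theorem abs_inner_gramSchmidt_sub_inner_le (n : ι) (w : E) :
    |⟪gramSchmidt ℝ f n, w⟫ - ⟪f n, w⟫| ≤
      ∑ i ∈ Iio n, |⟪gramSchmidtNormed ℝ f i, f n⟫| * |⟪gramSchmidtNormed ℝ f i, w⟫| := by
  rw [gramSchmidt_eq_sub_sum_inner_gramSchmidtNormed, inner_sub_left, sub_sub_cancel_left,
    abs_neg, sum_inner]
  refine (abs_sum_le_sum_abs _ _).trans_eq (sum_congr rfl fun i _ => ?_)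
  rw [real_inner_smul_left, abs_mul]

theorem norm_smul_gramSchmidtNormed_sub_le (Q : ℝ) (n : ι) :
    ‖Q • gramSchmidtNormed ℝ f n - f n‖ ≤ |Q - ‖f n‖| + 2 * ‖gramSchmidt ℝ f n - f n‖ := by
  set g := gramSchmidt ℝ f n
  have hrescale : ‖Q • gramSchmidtNormed ℝ f n - g‖ ≤ |Q - ‖g‖| := by
    by_cases hg : g = 0
    · simp [gramSchmidtNormed, g, hg]
    · have hg' : ‖g‖ ≠ 0 := norm_ne_zero_iff.mpr hg
      have : Q • gramSchmidtNormed ℝ f n - g = ((Q - ‖g‖) / ‖g‖) • g := by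
        rw [gramSchmidtNormed, smul_smul, sub_div, div_self hg', sub_smul, one_smul,
          div_eq_mul_inv]
        rfl
      rw [this, norm_smul, Real.norm_eq_abs, abs_div, abs_norm, div_mul_cancel₀ _ hg']
  calc ‖Q • gramSchmidtNormed ℝ f n - f n‖
      ≤ ‖Q • gramSchmidtNormed ℝ f n - g‖ + ‖g - f n‖ := norm_sub_le_norm_sub_add_norm_sub _ _ _
    _ ≤ |Q - ‖f n‖| + |‖f n‖ - ‖g‖| + ‖g - f n‖ := by
        gcongr
        exact hrescale.trans (abs_sub_le _ _ _)
    _ ≤ |Q - ‖f n‖| + 2 * ‖g - f n‖ := by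
        have := abs_norm_sub_norm_le (f n) g
        rw [norm_sub_rev] at this
        linarith

end GramSchmidt

section Perturbation

variable {E : Type*} [NormedAddCommGroup E] [InnerProductSpace ℝ E] {k : ℕ}

/-- `f 0` is `x` and `f 1, …, f k` are the `yⁱ`; `s` stands for `√ε` and `Q` for `√q'`. -/
structure NearlyOrthogonalTail (f : Fin (k + 1) → E) (s Q : ℝ) : Prop where
  nonneg : 0 ≤ s
  two_mul_lt : 2 * k * s < Q
  inner_head : ∀ m, 0 < m → |⟪f 0, f m⟫| ≤ s * ‖f 0‖
  norm_tail : ∀ n, 0 < n → |‖f n‖ - Q| ≤ s / 2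
  inner_tail : ∀ n m, 0 < n → n < m → |⟪f n, f m⟫| ≤ s ^ 2

variable {f : Fin (k + 1) → E} {s Q : ℝ}

theorem norm_gramSchmidt_sub_le_mul (n : Fin (k + 1))
    (h : ∀ i < n, |⟪gramSchmidtNormed ℝ f i, f n⟫| ≤ s) :
    ‖gramSchmidt ℝ f n - f n‖ ≤ n * s :=
  (norm_gramSchmidt_sub_le f n).trans <|
    (sum_le_card_nsmul _ _ _ fun i hi => h i (mem_Iio.mp hi)).trans_eq (by simp [Fin.card_Iio])

namespace NearlyOrthogonalTail

theorem abs_inner_gramSchmidtNormed_le (hf : NearlyOrthogonalTail f s Q) (i m : Fin (k + 1))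
    (him : i < m) : |⟪gramSchmidtNormed ℝ f i, f m⟫| ≤ s := by
  induction i using WellFoundedLT.induction generalizing m with
  | _ i ih =>
    rw [real_inner_gramSchmidtNormed_left, abs_div, abs_norm]
    rcases eq_bot_or_bot_lt i with rfl | hi
    · rw [gramSchmidt_bot]
      exact div_le_of_le_mul₀ (norm_nonneg _) hf.nonneg (hf.inner_head m him)
    have hik : (i : ℝ) + 1 ≤ k := by
      have : (i : ℕ) < m := him
      exact_mod_cast (by have := m.is_le; omega : (i : ℕ) + 1 ≤ k)
    have hdist := norm_gramSchmidt_sub_le_mul i fun j hj => ih j hj i hj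
    have hnorm_g : (i + 1) * s < ‖gramSchmidt ℝ f i‖ := by
      have := norm_sub_norm_le (f i) (gramSchmidt ℝ f i)
      rw [norm_sub_rev] at this
      have := (abs_le.mp (hf.norm_tail i hi)).1
      nlinarith [hf.two_mul_lt, hf.nonneg]
    have hinner_g : |⟪gramSchmidt ℝ f i, f m⟫| ≤ (i + 1) * s ^ 2 := by
      have hsum : ∑ j ∈ Iio i, |⟪gramSchmidtNormed ℝ f j, f i⟫| * |⟪gramSchmidtNormed ℝ f j, f m⟫|
          ≤ i * s ^ 2 := by
        refine (sum_le_card_nsmul _ _ (s ^ 2) fun j hj => ?_).trans_eq (by simp [Fin.card_Iio])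
        rw [sq]
        exact mul_le_mul (ih j (mem_Iio.mp hj) i (mem_Iio.mp hj))
          (ih j (mem_Iio.mp hj) m ((mem_Iio.mp hj).trans him)) (abs_nonneg _) hf.nonneg
      have := abs_sub_abs_le_abs_sub ⟪gramSchmidt ℝ f i, f m⟫ ⟪f i, f m⟫
      linarith [abs_inner_gramSchmidt_sub_inner_le f i (f m), hf.inner_tail i m hi him]
    rw [div_le_iff₀ (hnorm_g.trans_le' (by nlinarith [hf.nonneg]))]
    nlinarith [hf.nonneg]

theorem norm_gramSchmidt_sub_le (hf : NearlyOrthogonalTail f s Q) (n : Fin (k + 1)) :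
    ‖gramSchmidt ℝ f n - f n‖ ≤ n * s :=
  norm_gramSchmidt_sub_le_mul n fun i hi => hf.abs_inner_gramSchmidtNormed_le i n hi

theorem gramSchmidt_ne_zero (hf : NearlyOrthogonalTail f s Q) {n : Fin (k + 1)} (hn : 0 < n) :
    gramSchmidt ℝ f n ≠ 0 := by
  have hn' : 0 < (n : ℕ) := hn
  have hnk : (n : ℝ) ≤ k := by exact_mod_cast n.is_le
  have hk : (1 : ℝ) ≤ k := by exact_mod_cast hn'.trans_le n.is_le
  have := norm_sub_norm_le (f n) (gramSchmidt ℝ f n)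
  rw [norm_sub_rev] at this
  have := (abs_le.mp (hf.norm_tail n hn)).1
  have := hf.norm_gramSchmidt_sub_le n
  rw [← norm_pos_iff]
  nlinarith [hf.two_mul_lt, hf.nonneg]

theorem norm_smul_gramSchmidtNormed_sub_le (hf : NearlyOrthogonalTail f s Q) {n : Fin (k + 1)}
    (hn : 0 < n) : ‖Q • gramSchmidtNormed ℝ f n - f n‖ ≤ (2 * k + 1 / 2) * s := by
  have hnk : (n : ℝ) ≤ k := by exact_mod_cast n.is_le
  have := _root_.norm_smul_gramSchmidtNormed_sub_le f Q n
  rw [abs_sub_comm] at this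
  nlinarith [hf.norm_tail n hn, hf.norm_gramSchmidt_sub_le n, hf.nonneg]

end NearlyOrthogonalTail

theorem abs_sub_le_half_of_abs_sq_sub_sq_le {a Q s : ℝ} (ha : 0 ≤ a) (hs : 0 ≤ s)
    (hQ : 2 * s ≤ Q) (h : |a ^ 2 - Q ^ 2| ≤ s ^ 2) : |a - Q| ≤ s / 2 := by
  rw [abs_le] at h ⊢
  constructor <;> nlinarith

theorem exists_orthogonal_norm_sub_le_of_almost_orthogonal (x : E) (y : Fin k → E)
    (hs : 0 ≤ s) (hQ : 2 * k * s < Q) (hsx : s ≤ ‖x‖)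
    (hy : ∀ i, |‖y i‖ ^ 2 - Q ^ 2| ≤ s ^ 2) (hxy : ∀ i, |⟪x, y i⟫| ≤ s ^ 2)
    (hyy : ∀ i j, i ≠ j → |⟪y i, y j⟫| ≤ s ^ 2) :
    ∃ z : Fin k → E, (∀ i, ‖z i‖ = Q) ∧ (∀ i, ⟪x, z i⟫ = 0) ∧
      (∀ i j, i ≠ j → ⟪z i, z j⟫ = 0) ∧ ∀ i, ‖z i - y i‖ ≤ (2 * k + 1 / 2) * s := by
  set f : Fin (k + 1) → E := Fin.cons x y
  have hf : NearlyOrthogonalTail f s Q := by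
    refine ⟨hs, hQ, fun m hm => ?_, fun n hn => ?_, fun n m hn hnm => ?_⟩
    · obtain ⟨j, rfl⟩ := Fin.exists_succ_eq.mpr hm.ne'
      calc |⟪x, y j⟫| ≤ s ^ 2 := hxy j
        _ = s * s := sq s
        _ ≤ s * ‖x‖ := mul_le_mul_of_nonneg_left hsx hs
    · obtain ⟨j, rfl⟩ := Fin.exists_succ_eq.mpr hn.ne'
      have hk : (1 : ℝ) ≤ k := by exact_mod_cast j.pos
      exact abs_sub_le_half_of_abs_sq_sub_sq_le (norm_nonneg _) hs (by nlinarith) (hy j)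
    · obtain ⟨i, rfl⟩ := Fin.exists_succ_eq.mpr hn.ne'
      obtain ⟨j, rfl⟩ := Fin.exists_succ_eq.mpr (hn.trans hnm).ne'
      exact hyy i j fun h => hnm.ne (congrArg Fin.succ h)
  have horth : ∀ i j : Fin (k + 1), i ≠ j → ⟪gramSchmidt ℝ f i, gramSchmidtNormed ℝ f j⟫ = 0 :=
    fun i j hij => by
      rw [gramSchmidtNormed, real_inner_smul_right, gramSchmidt_orthogonal ℝ f hij, mul_zero]
  refine ⟨fun i => Q • gramSchmidtNormed ℝ f i.succ, fun i => ?_, fun i => ?_,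
    fun i j hij => ?_, fun i => ?_⟩
  · have hQ0 : 0 ≤ Q := by nlinarith
    rw [norm_smul, gramSchmidtNormed, norm_smul_inv_norm (hf.gramSchmidt_ne_zero i.succ_pos),
      Real.norm_eq_abs, abs_of_nonneg hQ0, mul_one]
  · have hx : gramSchmidt ℝ f 0 = x := gramSchmidt_bot ℝ f
    rw [real_inner_smul_right, ← hx, horth 0 i.succ (Fin.succ_ne_zero i).symm, mul_zero]
  · rw [real_inner_smul_left, real_inner_smul_right, gramSchmidtNormed, real_inner_smul_left,
      horth _ _ fun h => hij (Fin.succ_injective _ h), mul_zero, mul_zero, mul_zero]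
  · simpa [f] using hf.norm_smul_gramSchmidtNormed_sub_le i.succ_pos

theorem exists_orthonormal_forall_inner_eq_zero [FiniteDimensional ℝ E] (x : E)
    (hk : k + 1 ≤ finrank ℝ E) :
    ∃ v : Fin k → E, Orthonormal ℝ v ∧ ∀ i, ⟪x, v i⟫ = 0 := by
  have hK : k ≤ finrank ℝ (ℝ ∙ x)ᗮ := by
    have := (ℝ ∙ x).finrank_add_finrank_orthogonal
    have : finrank ℝ (ℝ ∙ x) ≤ 1 := (finrank_span_le_card _).trans (by simp)
    omega
  let b := stdOrthonormalBasis ℝ (ℝ ∙ x)ᗮ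
  refine ⟨fun i => b (Fin.castLE hK i),
    (b.orthonormal.comp _ (Fin.castLE_injective hK)).comp_linearIsometry (ℝ ∙ x)ᗮ.subtypeₗᵢ,
    fun i => ?_⟩
  exact Submodule.inner_right_of_mem_orthogonal (Submodule.mem_span_singleton_self x)
    (b (Fin.castLE hK i)).2

theorem exists_orthogonal_norm_sub_sq_le [FiniteDimensional ℝ E] (x : E) (y : Fin k → E)
    (hk : k + 1 ≤ finrank ℝ E) (hQ : 0 ≤ Q) :
    ∃ z : Fin k → E, (∀ i, ‖z i‖ = Q) ∧ (∀ i, ⟪x, z i⟫ = 0) ∧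
      (∀ i j, i ≠ j → ⟪z i, z j⟫ = 0) ∧ ∀ i, ‖z i - y i‖ ^ 2 ≤ Q ^ 2 + ‖y i‖ ^ 2 := by
  obtain ⟨v, hv, hxv⟩ := exists_orthonormal_forall_inner_eq_zero x hk
  let c i := if 0 ≤ ⟪v i, y i⟫ then Q else -Q
  have hc : ∀ i, |c i| = Q := fun i => by unfold c; split_ifs <;> simp [hQ]
  have hcv : ∀ i, 0 ≤ ⟪c i • v i, y i⟫ := fun i => by
    rw [real_inner_smul_left]
    unfold c
    split_ifs with h
    · exact mul_nonneg hQ h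
    · nlinarith
  have hnorm : ∀ i, ‖c i • v i‖ = Q := fun i => by
    rw [norm_smul, hv.1 i, Real.norm_eq_abs, hc, mul_one]
  refine ⟨fun i => c i • v i, hnorm, fun i => ?_, fun i j hij => ?_, fun i => ?_⟩
  · rw [real_inner_smul_right, hxv, mul_zero]
  · rw [real_inner_smul_left, real_inner_smul_right, hv.2 hij, mul_zero, mul_zero]
  · rw [norm_sub_sq_real, hnorm]
    linarith [hcv i]

end Perturbation

theorem two_mul_add_le_sq_of_sqrt_le {k q' ε : ℝ} (hk : 1 ≤ k) (hq' : 0 ≤ q') (hε : 0 ≤ ε)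
    (h : √q' ≤ 2 * k * √ε) : 2 * q' + ε ≤ (3 * k * √k * √ε) ^ 2 := by
  have hq'_le : q' ≤ 4 * k ^ 2 * ε := by
    have := pow_le_pow_left₀ (Real.sqrt_nonneg q') h 2
    rw [Real.sq_sqrt hq', mul_pow, mul_pow, Real.sq_sqrt hε] at this
    linarith
  have hεk : ε ≤ k ^ 2 * ε := le_mul_of_one_le_left hε (one_le_pow₀ hk)
  have hk3 : k ^ 2 * ε ≤ k ^ 2 * k * ε := by
    rw [mul_assoc]
    exact mul_le_mul_of_nonneg_left (le_mul_of_one_le_left hε hk) (by positivity)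
  rw [mul_pow, mul_pow, mul_pow, Real.sq_sqrt hε, Real.sq_sqrt (by positivity)]
  linarith

theorem stmt_16_general (N k : ℕ) (hNk : k + 1 ≤ N) (q₀ q q' ε : ℝ)
    (hq₀q : q₀ ≤ q)
    (hq' : q' ∈ Set.Icc (0 : ℝ) 1) (hε : ε ∈ Set.Icc (0 : ℝ) 1)
    (x : EuclideanSpace ℝ (Fin N)) (y : Fin k → EuclideanSpace ℝ (Fin N))
    (hx : ‖x‖ ^ 2 = q)
    (hy : ∀ i, |‖y i‖ ^ 2 - q'| ≤ ε)
    (hxy : ∀ i, |⟪x, y i⟫| ≤ ε)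
    (hyy : ∀ i j, i ≠ j → |⟪y i, y j⟫| ≤ ε) :
    ∃ z : Fin k → EuclideanSpace ℝ (Fin N),
      (∀ i, ‖z i‖ ^ 2 = q') ∧
      (∀ i, ⟪x, z i⟫ = 0) ∧
      (∀ i j, i ≠ j → ⟪z i, z j⟫ = 0) ∧
      ∀ i, ‖z i - y i‖
        ≤ (if (k : ℝ) ^ 2 * ε < q₀ then 3 * (k : ℝ) * Real.sqrt k * Real.sqrt ε else 2) := by
  obtain ⟨hq'0, hq'1⟩ := hq'
  obtain ⟨hε0, hε1⟩ := hε
  rcases Nat.eq_zero_or_pos k with rfl | hk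
  · exact ⟨0, by simp, by simp, by simp, by simp⟩
  have hk1 : (1 : ℝ) ≤ k := by exact_mod_cast hk
  by_cases hnear : (k : ℝ) ^ 2 * ε < q₀ ∧ 2 * k * √ε < √q'
  · obtain ⟨hkε, hQ⟩ := hnear
    have hεk : ε ≤ k ^ 2 * ε := le_mul_of_one_le_left hε0 (one_le_pow₀ hk1)
    have hsx : √ε ≤ ‖x‖ := (Real.sqrt_le_left (norm_nonneg x)).mpr (by linarith)
    obtain ⟨z, hz_norm, hxz, hzz, hzy⟩ := exists_orthogonal_norm_sub_le_of_almost_orthogonal x y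
      (Real.sqrt_nonneg ε) hQ hsx (by simpa [Real.sq_sqrt, hq'0, hε0] using hy)
      (by simpa [Real.sq_sqrt, hε0] using hxy) (by simpa [Real.sq_sqrt, hε0] using hyy)
    refine ⟨z, fun i => by rw [hz_norm, Real.sq_sqrt hq'0], hxz, hzz, fun i => ?_⟩
    have hsqrt_k : 1 ≤ √(k : ℝ) := Real.one_le_sqrt.mpr hk1
    rw [if_pos hkε]
    exact (hzy i).trans (mul_le_mul_of_nonneg_right (by nlinarith) (Real.sqrt_nonneg ε))
  obtain ⟨z, hz_norm, hxz, hzz, hzy⟩ :=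
    exists_orthogonal_norm_sub_sq_le x y (by simpa using hNk) (Real.sqrt_nonneg q')
  refine ⟨z, fun i => by rw [hz_norm, Real.sq_sqrt hq'0], hxz, hzz, fun i => ?_⟩
  have hdist : ‖z i - y i‖ ^ 2 ≤ 2 * q' + ε := by
    linarith [hzy i, Real.sq_sqrt hq'0, (abs_le.mp (hy i)).2]
  refine le_of_pow_le_pow_left₀ two_ne_zero (by split_ifs <;> positivity) (hdist.trans ?_)
  split_ifs with hkε
  · exact two_mul_add_le_sq_of_sqrt_le hk1 hq'0 hε0 (not_lt.mp fun h => hnear ⟨hkε, h⟩)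
  · linarith

/-- Perturbed Gram–Schmidt stability: given `x` of squared norm `q ∈ [q₀, 1]` (with
`q₀ > 0`) and vectors `y¹, …, y^k` whose Gram matrix together with `x` is within `ε` of
`diag(q, q', …, q')` (the `x` entry being exact), there exist `z¹, …, z^k` with squared
norm exactly `q'`, orthogonal to `x` and to each other, with
`‖zⁱ − yⁱ‖ ≤ ε'(ε, k, q₀)`, where one may take `ε' = 3 k^{3/2} √ε` when `k² ε < q₀`
and `ε' = 2` otherwise.  (We assume `N ≥ k + 1` so that `k` orthogonal directions in
`x^⊥` exist.) -/
theorem stmt_16 (N k : ℕ) (hNk : k + 1 ≤ N) (q₀ q q' ε : ℝ)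
    (hq₀ : 0 < q₀) (hq₀q : q₀ ≤ q) (hq1 : q ≤ 1)
    (hq' : q' ∈ Set.Icc (0 : ℝ) 1) (hε : ε ∈ Set.Icc (0 : ℝ) 1)
    (x : EuclideanSpace ℝ (Fin N)) (y : Fin k → EuclideanSpace ℝ (Fin N))
    (hx : ‖x‖ ^ 2 = q)
    (hy : ∀ i, |‖y i‖ ^ 2 - q'| ≤ ε)
    (hxy : ∀ i, |⟪x, y i⟫| ≤ ε)
    (hyy : ∀ i j, i ≠ j → |⟪y i, y j⟫| ≤ ε) :
    ∃ z : Fin k → EuclideanSpace ℝ (Fin N),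
      (∀ i, ‖z i‖ ^ 2 = q') ∧
      (∀ i, ⟪x, z i⟫ = 0) ∧
      (∀ i j, i ≠ j → ⟪z i, z j⟫ = 0) ∧
      ∀ i, ‖z i - y i‖
        ≤ (if (k : ℝ) ^ 2 * ε < q₀ then 3 * (k : ℝ) * Real.sqrt k * Real.sqrt ε else 2) :=
  stmt_16_general N k hNk q₀ q q' ε hq₀q hq' hε x y hx hy hxy hyy
end

section
/- (Lipschitz stability of the Perron eigenvector.) Let 0 < c < C < ∞ and let M, M̃ ∈ [c, C]^{r×r} be entrywise positive matrices with entrywise positive Perron–Frobenius eigenvectors v, ṽ normalized by ‖v‖₁ = ‖ṽ‖₁ = 1. Then ‖v − ṽ‖₁ ≤ K(c, C, r) · ‖M − M̃‖₁ for a constant K depending only on c, C, r. -/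
open scoped BigOperators

set_option maxHeartbeats 2000000 in
/-- Lipschitz stability of the Perron eigenvector: for `0 < c < C` there is a constant
`K = K(c, C, r)` such that for any two matrices `M, M'` with entries in `[c, C]` and
entrywise positive eigenvectors `v, v'` (necessarily the Perron–Frobenius eigenvectors)
normalized in `ℓ¹`, one has `‖v − v'‖₁ ≤ K ‖M − M'‖₁`. -/
theorem stmt_19 (r : ℕ) (c C : ℝ) (hc : 0 < c) (hcC : c < C) :
    ∃ K : ℝ, 0 < K ∧
      ∀ (M M' : Matrix (Fin r) (Fin r) ℝ) (v v' : Fin r → ℝ) (μ μ' : ℝ),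
        (∀ i j, M i j ∈ Set.Icc c C) → (∀ i j, M' i j ∈ Set.Icc c C) →
        (∀ i, 0 < v i) → (∀ i, 0 < v' i) →
        (∑ i, |v i| = 1) → (∑ i, |v' i| = 1) →
        M.mulVec v = μ • v → M'.mulVec v' = μ' • v' →
        ∑ i, |v i - v' i| ≤ K * ∑ i, ∑ j, |M i j - M' i j| := by
  have hC : 0 < C := hc.trans hcC
  refine ⟨4 * C ^ 3 / c ^ 4, by positivity, ?_⟩
  intro M M' v v' μ μ' hM hM' hv hv' hnv hnv' heig heig'
  rcases Nat.eq_zero_or_pos r with hr0 | hr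
  · subst hr0; simp
  have i0 : Fin r := ⟨0, hr⟩
  have hrpos : (0:ℝ) < (r:ℝ) := by exact_mod_cast hr
  set S := ∑ i, ∑ j, |M i j - M' i j| with hSdef
  have hS0 : 0 ≤ S := Finset.sum_nonneg fun i _ => Finset.sum_nonneg fun j _ => abs_nonneg _
  have hrow : ∀ i, ∑ j, |M i j - M' i j| ≤ S := fun i =>
    Finset.single_le_sum (f := fun i => ∑ j, |M i j - M' i j|)
      (fun i _ => Finset.sum_nonneg fun j _ => abs_nonneg _) (Finset.mem_univ i)
  have hsum : ∑ i, v i = 1 := by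
    rw [← hnv]; exact Finset.sum_congr rfl fun i _ => (abs_of_pos (hv i)).symm
  have hsum' : ∑ i, v' i = 1 := by
    rw [← hnv']; exact Finset.sum_congr rfl fun i _ => (abs_of_pos (hv' i)).symm
  have hμv : ∀ i, ∑ j, M i j * v j = μ * v i := by
    intro i
    have h := congrFun heig i
    simpa [Matrix.mulVec, dotProduct] using h
  have hμv' : ∀ i, ∑ j, M' i j * v' j = μ' * v' i := by
    intro i
    have h := congrFun heig' i
    simpa [Matrix.mulVec, dotProduct] using h
  have hlb : ∀ i, c ≤ μ * v i := by
    intro i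
    rw [← hμv i]
    calc c = ∑ j, c * v j := by rw [← Finset.mul_sum, hsum, mul_one]
      _ ≤ ∑ j, M i j * v j :=
        Finset.sum_le_sum fun j _ => mul_le_mul_of_nonneg_right (hM i j).1 (hv j).le
  have hub : ∀ i, μ * v i ≤ C := by
    intro i
    rw [← hμv i]
    calc ∑ j, M i j * v j ≤ ∑ j, C * v j :=
        Finset.sum_le_sum fun j _ => mul_le_mul_of_nonneg_right (hM i j).2 (hv j).le
      _ = C := by rw [← Finset.mul_sum, hsum, mul_one]
  have hlb' : ∀ i, c ≤ μ' * v' i := by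
    intro i
    rw [← hμv' i]
    calc c = ∑ j, c * v' j := by rw [← Finset.mul_sum, hsum', mul_one]
      _ ≤ ∑ j, M' i j * v' j :=
        Finset.sum_le_sum fun j _ => mul_le_mul_of_nonneg_right (hM' i j).1 (hv' j).le
  have hub' : ∀ i, μ' * v' i ≤ C := by
    intro i
    rw [← hμv' i]
    calc ∑ j, M' i j * v' j ≤ ∑ j, C * v' j :=
        Finset.sum_le_sum fun j _ => mul_le_mul_of_nonneg_right (hM' i j).2 (hv' j).le
      _ = C := by rw [← Finset.mul_sum, hsum', mul_one]
  have hμub : μ ≤ (r:ℝ) * C := by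
    calc μ = ∑ i : Fin r, μ * v i := by rw [← Finset.mul_sum, hsum, mul_one]
      _ ≤ ∑ _i : Fin r, C := Finset.sum_le_sum fun i _ => hub i
      _ = (r:ℝ) * C := by
          rw [Finset.sum_const, Finset.card_univ, Fintype.card_fin, nsmul_eq_mul]
  have hμlb : (r:ℝ) * c ≤ μ := by
    calc (r:ℝ) * c = ∑ _i : Fin r, c := by
          rw [Finset.sum_const, Finset.card_univ, Fintype.card_fin, nsmul_eq_mul]
      _ ≤ ∑ i : Fin r, μ * v i := Finset.sum_le_sum fun i _ => hlb i
      _ = μ := by rw [← Finset.mul_sum, hsum, mul_one]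
  have hμ'lb : (r:ℝ) * c ≤ μ' := by
    calc (r:ℝ) * c = ∑ _i : Fin r, c := by
          rw [Finset.sum_const, Finset.card_univ, Fintype.card_fin, nsmul_eq_mul]
      _ ≤ ∑ i : Fin r, μ' * v' i := Finset.sum_le_sum fun i _ => hlb' i
      _ = μ' := by rw [← Finset.mul_sum, hsum', mul_one]
  have hμpos : 0 < μ := lt_of_lt_of_le (mul_pos hrpos hc) hμlb
  have hμ'pos : 0 < μ' := lt_of_lt_of_le (mul_pos hrpos hc) hμ'lb
  -- the ratio vector
  set w : Fin r → ℝ := fun i => v' i / v i with hwdef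
  have hwpos : ∀ i, 0 < w i := fun i => div_pos (hv' i) (hv i)
  have hv'w : ∀ i, v' i = w i * v i := fun i =>
    (div_mul_cancel₀ (v' i) (hv i).ne').symm
  obtain ⟨a, -, ha⟩ := Finset.exists_max_image Finset.univ w ⟨i0, Finset.mem_univ i0⟩
  obtain ⟨b, -, hb⟩ := Finset.exists_min_image Finset.univ w ⟨i0, Finset.mem_univ i0⟩
  have ha' : ∀ j, w j ≤ w a := fun j => ha j (Finset.mem_univ j)
  have hb' : ∀ j, w b ≤ w j := fun j => hb j (Finset.mem_univ j)
  have hab : 0 ≤ w a - w b := sub_nonneg.2 (hb' a)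
  have hwa1 : 1 ≤ w a := by
    calc (1:ℝ) = ∑ i, v' i := hsum'.symm
      _ = ∑ i, w i * v i := Finset.sum_congr rfl fun i _ => hv'w i
      _ ≤ ∑ i, w a * v i :=
        Finset.sum_le_sum fun i _ => mul_le_mul_of_nonneg_right (ha' i) (hv i).le
      _ = w a := by rw [← Finset.mul_sum, hsum, mul_one]
  have hwb1 : w b ≤ 1 := by
    calc w b = ∑ i, w b * v i := by rw [← Finset.mul_sum, hsum, mul_one]
      _ ≤ ∑ i, w i * v i :=
        Finset.sum_le_sum fun i _ => mul_le_mul_of_nonneg_right (hb' i) (hv i).le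
      _ = ∑ i, v' i := Finset.sum_congr rfl fun i _ => (hv'w i).symm
      _ = 1 := hsum'
  -- ℓ¹ distance controlled by oscillation
  have hL1 : ∑ i, |v i - v' i| ≤ w a - w b := by
    calc ∑ i, |v i - v' i| ≤ ∑ i, (w a - w b) * v i := by
          apply Finset.sum_le_sum
          intro i _
          have h1 : v i - v' i = (1 - w i) * v i := by rw [hv'w i]; ring
          rw [h1, abs_mul, abs_of_pos (hv i)]
          apply mul_le_mul_of_nonneg_right _ (hv i).le
          rw [abs_le]
          constructor
          · linarith [ha' i, hwb1]
          · linarith [hb' i, hwa1]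
      _ = w a - w b := by rw [← Finset.mul_sum, hsum, mul_one]
  have hL2 : ∑ i, |v i - v' i| ≤ 2 := by
    calc ∑ i, |v i - v' i| ≤ ∑ i, (v i + v' i) := by
          apply Finset.sum_le_sum
          intro i _
          calc |v i - v' i| ≤ |v i| + |v' i| := abs_sub _ _
            _ = v i + v' i := by rw [abs_of_pos (hv i), abs_of_pos (hv' i)]
      _ = 2 := by rw [Finset.sum_add_distrib, hsum, hsum']; norm_num
  -- the perturbation terms
  set ε : Fin r → ℝ := fun i => ∑ j, (M' i j - M i j) * v' j with hεdef
  have hQ : ∀ i, μ' * v' i = (∑ j, M i j * v' j) + ε i := by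
    intro i
    rw [← hμv' i, hεdef]
    rw [← Finset.sum_add_distrib]
    exact Finset.sum_congr rfl fun j _ => by ring
  have hε1 : ∀ i, μ' * |ε i| ≤ C * S := by
    intro i
    have h1 : |ε i| ≤ ∑ j, |M' i j - M i j| * v' j := by
      refine (Finset.abs_sum_le_sum_abs _ _).trans (le_of_eq ?_)
      exact Finset.sum_congr rfl fun j _ => by rw [abs_mul, abs_of_pos (hv' j)]
    calc μ' * |ε i| ≤ μ' * ∑ j, |M' i j - M i j| * v' j :=
          mul_le_mul_of_nonneg_left h1 hμ'pos.le
      _ = ∑ j, |M' i j - M i j| * (μ' * v' j) := by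
          rw [Finset.mul_sum]; exact Finset.sum_congr rfl fun j _ => by ring
      _ ≤ ∑ j, |M' i j - M i j| * C :=
          Finset.sum_le_sum fun j _ => mul_le_mul_of_nonneg_left (hub' j) (abs_nonneg _)
      _ = (∑ j, |M i j - M' i j|) * C := by
          rw [← Finset.sum_mul]
          exact congrArg (· * C) (Finset.sum_congr rfl fun j _ => by rw [abs_sub_comm])
      _ ≤ S * C := mul_le_mul_of_nonneg_right (hrow i) hC.le
      _ = C * S := mul_comm _ _
  have hεv2 : ∀ i, (r:ℝ) * (|ε i| * c ^ 2) ≤ (r:ℝ) * (C ^ 2 * S * v i) := by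
    intro i
    nlinarith [mul_nonneg (mul_nonneg (mul_nonneg hC.le hS0) (sub_nonneg.2 hμub)) (hv i).le,
      mul_nonneg (mul_nonneg hC.le hS0) (sub_nonneg.2 (hlb i)),
      mul_nonneg hc.le (mul_nonneg (sub_nonneg.2 hμ'lb) (abs_nonneg (ε i))),
      mul_nonneg hc.le (sub_nonneg.2 (hε1 i))]
  have hεv : ∀ i, |ε i| ≤ C ^ 2 / c ^ 2 * S * v i := by
    intro i
    have h2 : |ε i| * c ^ 2 ≤ C ^ 2 * S * v i := le_of_mul_le_mul_left (hεv2 i) hrpos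
    rw [div_mul_eq_mul_div, div_mul_eq_mul_div, le_div_iff₀ (pow_pos hc 2)]
    exact h2
  have hEa : |ε a| / v a ≤ C ^ 2 / c ^ 2 * S := by
    rw [div_le_iff₀ (hv a)]; exact hεv a
  have hEb : |ε b| / v b ≤ C ^ 2 / c ^ 2 * S := by
    rw [div_le_iff₀ (hv b)]; exact hεv b
  -- the normalized matrix and its Doeblin bound
  set δ : ℝ := c ^ 2 / (μ * C) with hδdef
  have hμδ : μ * δ = c ^ 2 / C := by
    rw [hδdef]; field_simp
  have hδ : ∀ i j, δ ≤ M i j * v j / (μ * v i) := by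
    intro i j
    rw [hδdef, div_le_div_iff₀ (mul_pos hμpos hC) (mul_pos hμpos (hv i))]
    nlinarith [mul_nonneg (mul_nonneg hC.le (sub_nonneg.2 (hM i j).1)) (mul_pos hμpos (hv j)).le,
      mul_nonneg (mul_nonneg hC.le hc.le) (sub_nonneg.2 (hlb j)),
      mul_nonneg (mul_pos hc hc).le (sub_nonneg.2 (hub i))]
  have hA1 : ∀ i, ∑ j, M i j * v j / (μ * v i) = 1 := by
    intro i
    rw [← Finset.sum_div, hμv i, div_self (mul_pos hμpos (hv i)).ne']
  have hAw : ∀ i, ∑ j, (M i j * v j / (μ * v i)) * w j = (∑ j, M i j * v' j) / (μ * v i) := by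
    intro i
    rw [Finset.sum_div]
    refine Finset.sum_congr rfl fun j _ => ?_
    have h1 : v j ≠ 0 := (hv j).ne'
    have h2 : μ * v i ≠ 0 := (mul_pos hμpos (hv i)).ne'
    simp only [hwdef]
    field_simp
  -- the main equation
  have hmain : ∀ i, μ' * w i = μ * ((∑ j, M i j * v' j) / (μ * v i)) + ε i / v i := by
    intro i
    calc μ' * w i = (μ' * v' i) / v i := by simp only [hwdef]; rw [mul_div_assoc]
      _ = ((∑ j, M i j * v' j) + ε i) / v i := by rw [hQ i]
      _ = (∑ j, M i j * v' j) / v i + ε i / v i := by rw [add_div]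
      _ = μ * ((∑ j, M i j * v' j) / (μ * v i)) + ε i / v i := by
          rw [← mul_div_assoc, mul_div_mul_left _ _ hμpos.ne']
  -- contraction estimate
  have quad : ∀ Aa Ab x y z : ℝ, δ ≤ Aa → δ ≤ Ab → z ≤ x → x ≤ y →
      Aa * x - Ab * x ≤ (Aa - δ) * (y - z) + (Aa - Ab) * z := by
    intro Aa Ab x y z h1 h2 h3 h4
    nlinarith [mul_nonneg (sub_nonneg.2 h1) (sub_nonneg.2 h4),
      mul_nonneg (sub_nonneg.2 h2) (sub_nonneg.2 h3)]
  have hkey : (∑ j, M a j * v' j) / (μ * v a) - (∑ j, M b j * v' j) / (μ * v b)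
      ≤ (1 - (r:ℝ) * δ) * (w a - w b) := by
    rw [← hAw a, ← hAw b, ← Finset.sum_sub_distrib]
    have hterm : ∀ j ∈ Finset.univ, (M a j * v j / (μ * v a)) * w j
        - (M b j * v j / (μ * v b)) * w j
        ≤ (M a j * v j / (μ * v a) - δ) * (w a - w b)
          + (M a j * v j / (μ * v a) - M b j * v j / (μ * v b)) * w b := by
      intro j _
      exact quad _ _ _ _ _ (hδ a j) (hδ b j) (hb' j) (ha' j)
    refine (Finset.sum_le_sum hterm).trans (le_of_eq ?_)
    have h5 : ∑ j, (M a j * v j / (μ * v a) - δ) = 1 - (r:ℝ) * δ := by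
      rw [Finset.sum_sub_distrib, hA1 a, Finset.sum_const, Finset.card_univ,
        Fintype.card_fin, nsmul_eq_mul]
    have h6 : ∑ j, (M a j * v j / (μ * v a) - M b j * v j / (μ * v b)) = 0 := by
      rw [Finset.sum_sub_distrib, hA1 a, hA1 b, sub_self]
    rw [Finset.sum_add_distrib, ← Finset.sum_mul, ← Finset.sum_mul, h5, h6, zero_mul, add_zero]
  -- inequality F1
  have hF1 : μ' * (w a - w b)
      ≤ (μ - c ^ 2 / C) * (w a - w b) + (|ε a| / v a + |ε b| / v b) := by
    have h7 : μ' * (w a - w b)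
        = μ * ((∑ j, M a j * v' j) / (μ * v a) - (∑ j, M b j * v' j) / (μ * v b))
          + (ε a / v a - ε b / v b) := by
      rw [mul_sub, hmain a, hmain b]; ring
    have h8 : μ * ((∑ j, M a j * v' j) / (μ * v a) - (∑ j, M b j * v' j) / (μ * v b))
        ≤ μ * ((1 - (r:ℝ) * δ) * (w a - w b)) := mul_le_mul_of_nonneg_left hkey hμpos.le
    have h9 : μ * ((1 - (r:ℝ) * δ) * (w a - w b)) = (μ - (r:ℝ) * (c ^ 2 / C)) * (w a - w b) := by
      rw [← hμδ]; ring
    have h10 : (μ - (r:ℝ) * (c ^ 2 / C)) * (w a - w b) ≤ (μ - c ^ 2 / C) * (w a - w b) := by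
      apply mul_le_mul_of_nonneg_right _ hab
      have hr1 : (1:ℝ) ≤ (r:ℝ) := by exact_mod_cast hr
      have hx : 0 < c ^ 2 / C := by positivity
      nlinarith
    have h11 : ε a / v a ≤ |ε a| / v a :=
      div_le_div_of_nonneg_right (le_abs_self _) (hv a).le
    have h12 : -(ε b / v b) ≤ |ε b| / v b := by
      rw [← neg_div]
      exact div_le_div_of_nonneg_right (neg_le_abs _) (hv b).le
    linarith [h7, h8.trans_eq h9, h10, h11, h12]
  -- inequality F2 : eigenvalue stability
  have hF2 : μ - C / c * S ≤ μ' := by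
    set e2 : ℝ := ∑ j, (M' b j - M b j) * v j with he2def
    have hε'1 : μ * |e2| ≤ C * S := by
      have h1 : |e2| ≤ ∑ j, |M' b j - M b j| * v j := by
        refine (Finset.abs_sum_le_sum_abs _ _).trans (le_of_eq ?_)
        exact Finset.sum_congr rfl fun j _ => by rw [abs_mul, abs_of_pos (hv j)]
      calc μ * |e2| ≤ μ * ∑ j, |M' b j - M b j| * v j :=
            mul_le_mul_of_nonneg_left h1 hμpos.le
        _ = ∑ j, |M' b j - M b j| * (μ * v j) := by
            rw [Finset.mul_sum]; exact Finset.sum_congr rfl fun j _ => by ring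
        _ ≤ ∑ j, |M' b j - M b j| * C :=
            Finset.sum_le_sum fun j _ => mul_le_mul_of_nonneg_left (hub j) (abs_nonneg _)
        _ = (∑ j, |M b j - M' b j|) * C := by
            rw [← Finset.sum_mul]
            exact congrArg (· * C) (Finset.sum_congr rfl fun j _ => by rw [abs_sub_comm])
        _ ≤ S * C := mul_le_mul_of_nonneg_right (hrow b) hC.le
        _ = C * S := mul_comm _ _
    have h1 : w b * (∑ j, M' b j * v j) ≤ μ' * v' b := by
      rw [← hμv' b, Finset.mul_sum]
      refine Finset.sum_le_sum fun j _ => ?_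
      have hM'pos : (0:ℝ) < M' b j := lt_of_lt_of_le hc (hM' b j).1
      have hlow : w b * v j ≤ v' j := by
        have h := hb' j
        simp only [hwdef] at h
        exact (le_div_iff₀ (hv j)).1 h
      calc w b * (M' b j * v j) = M' b j * (w b * v j) := by ring
        _ ≤ M' b j * v' j := mul_le_mul_of_nonneg_left hlow hM'pos.le
    have h2 : ∑ j, M' b j * v j = μ * v b + e2 := by
      rw [← hμv b, he2def, ← Finset.sum_add_distrib]
      exact Finset.sum_congr rfl fun j _ => by ring
    have h1' : w b * (μ * v b + e2) ≤ μ' * (w b * v b) := by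
      rw [← h2, ← hv'w b]; exact h1
    have hneg : w b * -|e2| ≤ w b * e2 :=
      mul_le_mul_of_nonneg_left (neg_abs_le e2) (hwpos b).le
    have h4' : w b * (μ * v b - |e2|) ≤ w b * (μ' * v b) := by nlinarith [h1', hneg]
    have h4 : μ * v b - |e2| ≤ μ' * v b := le_of_mul_le_mul_left h4' (hwpos b)
    have h5' : μ * (|e2| * c) ≤ μ * (C * S * v b) := by
      nlinarith [mul_nonneg (mul_nonneg hC.le hS0) (sub_nonneg.2 (hlb b)),
        mul_nonneg hc.le (sub_nonneg.2 hε'1)]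
    have h5'' : |e2| * c ≤ C * S * v b := le_of_mul_le_mul_left h5' hμpos
    have h5 : |e2| ≤ C / c * S * v b := by
      rw [div_mul_eq_mul_div, div_mul_eq_mul_div, le_div_iff₀ hc]
      exact h5''
    have h6 : (μ - C / c * S) * v b ≤ μ' * v b := by nlinarith [h4, h5]
    exact le_of_mul_le_mul_right h6 (hv b)
  -- combine
  have h9' : (μ - C / c * S) * (w a - w b) ≤ μ' * (w a - w b) :=
    mul_le_mul_of_nonneg_right hF2 hab
  have hG : c ^ 2 / C * (w a - w b)
      ≤ C / c * S * (w a - w b) + 2 * (C ^ 2 / c ^ 2 * S) := by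
    nlinarith [h9', hF1, hEa, hEb]
  have hGc : c ^ 4 * (w a - w b)
      ≤ C ^ 2 * c * S * (w a - w b) + 2 * (C ^ 3 * S) := by
    have h := mul_le_mul_of_nonneg_left hG (by positivity : (0:ℝ) ≤ C * c ^ 2)
    have e1 : C * c ^ 2 * (c ^ 2 / C * (w a - w b)) = c ^ 4 * (w a - w b) := by
      field_simp
    have e3 : C * c ^ 2 * (C / c * S * (w a - w b) + 2 * (C ^ 2 / c ^ 2 * S))
        = C ^ 2 * c * S * (w a - w b) + 2 * (C ^ 3 * S) := by
      field_simp
    rw [e1, e3] at h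
    exact h
  rw [div_mul_eq_mul_div, le_div_iff₀ (by positivity : (0:ℝ) < c ^ 4)]
  rcases le_or_gt (2 * (C ^ 2 * c * S)) (c ^ 4) with hcase | hcase
  · nlinarith [hGc, mul_le_mul_of_nonneg_right hL1 (by positivity : (0:ℝ) ≤ c ^ 4),
      mul_le_mul_of_nonneg_right hcase hab, hS0, hab]
  · nlinarith [hL2, hS0, hcase, mul_le_mul_of_nonneg_right hL2 (by positivity : (0:ℝ) ≤ c ^ 4),
      mul_nonneg (mul_nonneg hS0 (sub_nonneg.2 hcC.le)) (sq_nonneg C)]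
end
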